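/- arXiv:math/0412478 — 8 statements merged into one kernel-verified Lean document; each statement's English description precedes it below -/
import Mathlib

section
/- Let Q be a supported quantale with support ς, unit e, involution a ↦ a*, top element 1 and bottom element 0. Then for all a, b ∈ Q: (i) ς a = a whenever a ≤ e; (ii) ς(ς a) = ς a; (iii) if ς a ≤ ς b then a = (ς b) a; (iv) a = (ς a) a; (v) (ς a)* = ς a; (vi) a = a ς(a*); (vii) ς a = 0 if and only if a = 0; (viii) ς a ≤ ς(a a*); (ix) (ς a) 1 = a 1; (x) a 1 = a a* 1; (xi) (ς a)(ς a) = ς a; (xii) a ≤ a a* a; (xiii) ς(a 1) b = a 1 ∧ b; (xiv) ς(a 1) = a 1 ∧ e; (xv) ς(a ∧ b) ≤ a b*. -/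
/-!
Everything follows from monotonicity of the operations and the three support axioms. The bounds
`ς a ≤ e` and `a ≤ (ς a) a` force `a = (ς a) a`; for `a ≤ e` they also squeeze `ς a` between
`a ≤ (ς a) a ≤ ς a` and `ς a ≤ a a* ≤ a e* = a`, which makes `ς` idempotent with self-adjoint
values. For `x = a 1`, `ς x b` lies below `x` (as `ς x 1 = x 1 = x`) and below `b` (as `ς x ≤ e`);
conversely `x ∧ b ≤ ς (x ∧ b) (x ∧ b) ≤ ς x b` by monotonicity of `ς`.
-/

section SSupPreserving

variable {α β : Type*} [CompleteLattice α] [CompleteLattice β] {f : α → β}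

theorem monotone_of_map_sSup (hf : ∀ T : Set α, f (sSup T) = sSup (f '' T)) : Monotone f :=
  OrderHomClass.mono (sSupHom.mk f hf)

theorem map_bot_of_map_sSup (hf : ∀ T : Set α, f (sSup T) = sSup (f '' T)) : f ⊥ = ⊥ :=
  map_bot (sSupHom.mk f hf)

end SSupPreserving

section SupportedQuantale

variable {Q : Type*} [CompleteLattice Q]

structure IsUnitalInvolutiveQuantale (m : Q → Q → Q) (e : Q) (st : Q → Q) : Prop where
  mul_assoc : ∀ a b c : Q, m (m a b) c = m a (m b c)
  mul_sSup : ∀ (a : Q) (T : Set Q), m a (sSup T) = sSup ((fun b => m a b) '' T)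
  sSup_mul : ∀ (b : Q) (T : Set Q), m (sSup T) b = sSup ((fun a => m a b) '' T)
  unit_mul : ∀ a : Q, m e a = a
  mul_unit : ∀ a : Q, m a e = a
  st_sSup : ∀ T : Set Q, st (sSup T) = sSup (st '' T)
  st_st : ∀ a : Q, st (st a) = a
  st_mul : ∀ a b : Q, st (m a b) = m (st b) (st a)

structure IsSupport (m : Q → Q → Q) (e : Q) (st sp : Q → Q) : Prop where
  sp_sSup : ∀ T : Set Q, sp (sSup T) = sSup (sp '' T)
  sp_le_unit : ∀ a : Q, sp a ≤ e
  sp_le_mul_st : ∀ a : Q, sp a ≤ m a (st a)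
  le_sp_mul : ∀ a : Q, a ≤ m (sp a) a

variable {m : Q → Q → Q} {e : Q} {st sp : Q → Q}

namespace IsUnitalInvolutiveQuantale

theorem mul_left_mono (hQ : IsUnitalInvolutiveQuantale m e st) (c : Q) : Monotone (m c) :=
  monotone_of_map_sSup (hQ.mul_sSup c)

theorem mul_right_mono (hQ : IsUnitalInvolutiveQuantale m e st) (c : Q) : Monotone (m · c) :=
  monotone_of_map_sSup (hQ.sSup_mul c)

theorem st_mono (hQ : IsUnitalInvolutiveQuantale m e st) : Monotone st :=
  monotone_of_map_sSup hQ.st_sSup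

theorem bot_mul (hQ : IsUnitalInvolutiveQuantale m e st) (a : Q) : m ⊥ a = ⊥ :=
  map_bot_of_map_sSup (f := (m · a)) (hQ.sSup_mul a)

theorem st_unit (hQ : IsUnitalInvolutiveQuantale m e st) : st e = e :=
  calc st e = st (st (m e (st e))) := by rw [hQ.st_st, hQ.unit_mul]
    _ = e := by rw [hQ.st_mul, hQ.st_st, hQ.unit_mul, hQ.st_st]

theorem top_mul_top (hQ : IsUnitalInvolutiveQuantale m e st) : m ⊤ ⊤ = ⊤ :=
  top_le_iff.mp <| (hQ.unit_mul ⊤).symm.trans_le (hQ.mul_right_mono ⊤ le_top)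

end IsUnitalInvolutiveQuantale

namespace IsSupport

theorem sp_mono (hS : IsSupport m e st sp) : Monotone sp :=
  monotone_of_map_sSup hS.sp_sSup

theorem sp_bot (hS : IsSupport m e st sp) : sp ⊥ = ⊥ :=
  map_bot_of_map_sSup hS.sp_sSup

theorem sp_eq_of_le_unit (hQ : IsUnitalInvolutiveQuantale m e st)
    (hS : IsSupport m e st sp) {a : Q} (ha : a ≤ e) : sp a = a :=
  le_antisymm
    (calc sp a ≤ m a (st a) := hS.sp_le_mul_st a
      _ ≤ m a (st e) := hQ.mul_left_mono a (hQ.st_mono ha)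
      _ = a := by rw [hQ.st_unit, hQ.mul_unit])
    (calc a ≤ m (sp a) a := hS.le_sp_mul a
      _ ≤ m (sp a) e := hQ.mul_left_mono _ ha
      _ = sp a := hQ.mul_unit _)

theorem sp_sp (hQ : IsUnitalInvolutiveQuantale m e st)
    (hS : IsSupport m e st sp) (a : Q) : sp (sp a) = sp a :=
  hS.sp_eq_of_le_unit hQ (hS.sp_le_unit a)

theorem eq_sp_mul_of_sp_le (hQ : IsUnitalInvolutiveQuantale m e st)
    (hS : IsSupport m e st sp) {a b : Q} (h : sp a ≤ sp b) :
    a = m (sp b) a :=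
  le_antisymm ((hS.le_sp_mul a).trans (hQ.mul_right_mono a h))
    ((hQ.mul_right_mono a (hS.sp_le_unit b)).trans_eq (hQ.unit_mul a))

theorem eq_sp_mul (hQ : IsUnitalInvolutiveQuantale m e st)
    (hS : IsSupport m e st sp) (a : Q) : a = m (sp a) a :=
  hS.eq_sp_mul_of_sp_le hQ le_rfl

theorem st_sp (hQ : IsUnitalInvolutiveQuantale m e st)
    (hS : IsSupport m e st sp) (a : Q) : st (sp a) = sp a := by
  have h : sp a ≤ st (sp a) :=
    calc sp a = sp (sp a) := (hS.sp_sp hQ a).symm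
      _ ≤ m (sp a) (st (sp a)) := hS.sp_le_mul_st _
      _ ≤ m e (st (sp a)) := hQ.mul_right_mono _ (hS.sp_le_unit a)
      _ = st (sp a) := hQ.unit_mul _
  refine le_antisymm ?_ h
  simpa only [hQ.st_st] using hQ.st_mono h

theorem eq_mul_sp_st (hQ : IsUnitalInvolutiveQuantale m e st)
    (hS : IsSupport m e st sp) (a : Q) : a = m a (sp (st a)) := by
  simpa only [hQ.st_st, hQ.st_mul, hS.st_sp hQ] using congrArg st (hS.eq_sp_mul hQ (st a))

theorem sp_eq_bot_iff (hQ : IsUnitalInvolutiveQuantale m e st)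
    (hS : IsSupport m e st sp) {a : Q} : sp a = ⊥ ↔ a = ⊥ := by
  refine ⟨fun h => le_bot_iff.mp ?_, fun h => h ▸ hS.sp_bot⟩
  simpa only [h, hQ.bot_mul] using hS.le_sp_mul a

theorem sp_le_sp_mul_st (hQ : IsUnitalInvolutiveQuantale m e st)
    (hS : IsSupport m e st sp) (a : Q) : sp a ≤ sp (m a (st a)) :=
  (hS.sp_sp hQ a).symm.trans_le (hS.sp_mono (hS.sp_le_mul_st a))

theorem sp_mul_top (hQ : IsUnitalInvolutiveQuantale m e st)
    (hS : IsSupport m e st sp) (a : Q) : m (sp a) ⊤ = m a ⊤ :=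
  le_antisymm
    (calc m (sp a) ⊤ ≤ m (m a (st a)) ⊤ := hQ.mul_right_mono ⊤ (hS.sp_le_mul_st a)
      _ = m a (m (st a) ⊤) := hQ.mul_assoc ..
      _ ≤ m a ⊤ := hQ.mul_left_mono a le_top)
    (calc m a ⊤ = m (m (sp a) a) ⊤ := by rw [← hS.eq_sp_mul hQ a]
      _ = m (sp a) (m a ⊤) := hQ.mul_assoc ..
      _ ≤ m (sp a) ⊤ := hQ.mul_left_mono _ le_top)

theorem le_mul_st_mul (hQ : IsUnitalInvolutiveQuantale m e st)
    (hS : IsSupport m e st sp) (a : Q) : a ≤ m (m a (st a)) a :=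
  (hS.le_sp_mul a).trans (hQ.mul_right_mono a (hS.sp_le_mul_st a))

theorem mul_top_eq_mul_st_mul_top (hQ : IsUnitalInvolutiveQuantale m e st)
    (hS : IsSupport m e st sp) (a : Q) :
    m a ⊤ = m (m a (st a)) ⊤ :=
  le_antisymm
    (calc m a ⊤ ≤ m (m (m a (st a)) a) ⊤ := hQ.mul_right_mono ⊤ (hS.le_mul_st_mul hQ a)
      _ = m (m a (st a)) (m a ⊤) := hQ.mul_assoc ..
      _ ≤ m (m a (st a)) ⊤ := hQ.mul_left_mono _ le_top)
    (calc m (m a (st a)) ⊤ = m a (m (st a) ⊤) := hQ.mul_assoc ..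
      _ ≤ m a ⊤ := hQ.mul_left_mono a le_top)

theorem sp_mul_sp (hQ : IsUnitalInvolutiveQuantale m e st)
    (hS : IsSupport m e st sp) (a : Q) : m (sp a) (sp a) = sp a := by
  simpa only [hS.sp_sp hQ] using (hS.eq_sp_mul hQ (sp a)).symm

theorem sp_mul_top_mul_eq_inf (hQ : IsUnitalInvolutiveQuantale m e st)
    (hS : IsSupport m e st sp) (a b : Q) :
    m (sp (m a ⊤)) b = m a ⊤ ⊓ b := by
  refine le_antisymm (le_inf ?_ ?_) ?_
  · calc m (sp (m a ⊤)) b ≤ m (sp (m a ⊤)) ⊤ := hQ.mul_left_mono _ le_top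
      _ = m (m a ⊤) ⊤ := hS.sp_mul_top hQ _
      _ = m a ⊤ := by rw [hQ.mul_assoc, hQ.top_mul_top]
  · exact (hQ.mul_right_mono b (hS.sp_le_unit _)).trans_eq (hQ.unit_mul b)
  · calc m a ⊤ ⊓ b ≤ m (sp (m a ⊤ ⊓ b)) (m a ⊤ ⊓ b) := hS.le_sp_mul _
      _ ≤ m (sp (m a ⊤ ⊓ b)) b := hQ.mul_left_mono _ inf_le_right
      _ ≤ m (sp (m a ⊤)) b := hQ.mul_right_mono b (hS.sp_mono inf_le_left)

theorem sp_mul_top_eq_inf_unit (hQ : IsUnitalInvolutiveQuantale m e st)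
    (hS : IsSupport m e st sp) (a : Q) : sp (m a ⊤) = m a ⊤ ⊓ e := by
  simpa only [hQ.mul_unit] using hS.sp_mul_top_mul_eq_inf hQ a e

theorem sp_inf_le_mul_st (hQ : IsUnitalInvolutiveQuantale m e st)
    (hS : IsSupport m e st sp) (a b : Q) : sp (a ⊓ b) ≤ m a (st b) :=
  (hS.sp_le_mul_st _).trans <|
    (hQ.mul_right_mono _ inf_le_left).trans (hQ.mul_left_mono a (hQ.st_mono inf_le_right))

end IsSupport

end SupportedQuantale

/-- Basic properties of supported quantales (Lemma `prop:supps`). -/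
theorem stmt_0 {Q : Type*} [CompleteLattice Q]
    (m : Q → Q → Q) (e : Q) (st : Q → Q) (sp : Q → Q)
    (hassoc : ∀ a b c : Q, m (m a b) c = m a (m b c))
    (hdistl : ∀ (a : Q) (T : Set Q), m a (sSup T) = sSup ((fun b => m a b) '' T))
    (hdistr : ∀ (b : Q) (T : Set Q), m (sSup T) b = sSup ((fun a => m a b) '' T))
    (hel : ∀ a : Q, m e a = a) (her : ∀ a : Q, m a e = a)
    (hstsup : ∀ T : Set Q, st (sSup T) = sSup (st '' T))
    (hstst : ∀ a : Q, st (st a) = a)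
    (hstm : ∀ a b : Q, st (m a b) = m (st b) (st a))
    (hspsup : ∀ T : Set Q, sp (sSup T) = sSup (sp '' T))
    (hsp1 : ∀ a : Q, sp a ≤ e)
    (hsp2 : ∀ a : Q, sp a ≤ m a (st a))
    (hsp3 : ∀ a : Q, a ≤ m (sp a) a) :
    ∀ a b : Q,
      (a ≤ e → sp a = a) ∧
      sp (sp a) = sp a ∧
      (sp a ≤ sp b → a = m (sp b) a) ∧
      a = m (sp a) a ∧
      st (sp a) = sp a ∧
      a = m a (sp (st a)) ∧
      (sp a = ⊥ ↔ a = ⊥) ∧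
      sp a ≤ sp (m a (st a)) ∧
      m (sp a) ⊤ = m a ⊤ ∧
      m a ⊤ = m (m a (st a)) ⊤ ∧
      m (sp a) (sp a) = sp a ∧
      a ≤ m (m a (st a)) a ∧
      m (sp (m a ⊤)) b = m a ⊤ ⊓ b ∧
      sp (m a ⊤) = m a ⊤ ⊓ e ∧
      sp (a ⊓ b) ≤ m a (st b) := by
  have hQ : IsUnitalInvolutiveQuantale m e st :=
    ⟨hassoc, hdistl, hdistr, hel, her, hstsup, hstst, hstm⟩
  have hS : IsSupport m e st sp := ⟨hspsup, hsp1, hsp2, hsp3⟩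
  intro a b
  exact ⟨hS.sp_eq_of_le_unit hQ, hS.sp_sp hQ a, hS.eq_sp_mul_of_sp_le hQ, hS.eq_sp_mul hQ a,
    hS.st_sp hQ a, hS.eq_mul_sp_st hQ a, hS.sp_eq_bot_iff hQ, hS.sp_le_sp_mul_st hQ a,
    hS.sp_mul_top hQ a, hS.mul_top_eq_mul_st_mul_top hQ a, hS.sp_mul_sp hQ a,
    hS.le_mul_st_mul hQ a, hS.sp_mul_top_mul_eq_inf hQ a b, hS.sp_mul_top_eq_inf_unit hQ a,
    hS.sp_inf_le_mul_st hQ a b⟩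
end

section
/- Let Q be a supported quantale with support ς and unit e. The following conditions are equivalent: (1) ς(a b) = ς(a ς b) for all a, b; (2) ς(a b) ≤ ς a for all a, b; (3) ς(a 1) = ς a for all a; (4) a 1 ∧ e = ς a for all a; (5) a 1 ∧ b = (ς a) b for all a, b; (6) for all a, b: a ≤ (ς b) a if and only if ς a ≤ ς b; (7) ς a = ⨅{ b : b ≤ e and a ≤ b a } for all a; (8) for all a, b: ς a ≤ b 1 if and only if ς a ≤ ς b; (9) ς a = ⨆{ b : b ≤ e and b ≤ a 1 } for all a. -/
/-!
A support fixes every element below the unit (the involution is monotone and fixes `1`), and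
`ς a * a = a`. Stability (2) gives `ς (a * ⊤) = ς a`, so `ς a = a * ⊤ ⊓ 1` is the largest element
below `1` and `a * ⊤`; this yields `a * ⊤ ⊓ b = ς a * b`, so `a * ⊤ = ς a * ⊤` depends only on
`ς a`, which is (1). Conditions (6), (7) say that `ς a` is the least `b ≤ 1` with `a ≤ b * a`, and
(8), (9) that it is the greatest `b ≤ 1` below `a * ⊤`; they are equivalent to (2) and (4).
-/

section

variable {Q : Type*} [CompleteLattice Q]

theorem sSup_setOf_le_and_le (x y : Q) : sSup {b | b ≤ x ∧ b ≤ y} = x ⊓ y := by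
  simpa only [Set.Iic, le_inf_iff] using (isLUB_Iic (a := x ⊓ y)).sSup_eq

instance IsQuantale.toMulLeftMono [Semigroup Q] [IsQuantale Q] : MulLeftMono Q where
  elim a b c h := by
    change a * b ≤ a * c
    rw [← sup_eq_right.mpr h, Quantale.mul_sup_distrib]
    exact le_sup_left

instance IsQuantale.toMulRightMono [Semigroup Q] [IsQuantale Q] : MulRightMono Q where
  elim a b c h := by
    change b * a ≤ c * a
    rw [← sup_eq_right.mpr h, Quantale.sup_mul_distrib]
    exact le_sup_left

theorem Quantale.top_mul_top [Monoid Q] [IsQuantale Q] : (⊤ : Q) * ⊤ = ⊤ :=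
  le_top.antisymm ((one_mul (⊤ : Q)).symm.trans_le (mul_le_mul_left le_top ⊤))

variable [Monoid Q]

theorem map_mul_eq_map_mul_of_mul_top_inf {ς : Q → Q} (h : ∀ a b, a * ⊤ ⊓ b = ς a * b)
    (a b : Q) : ς (a * b) = ς (a * ς b) := by
  have mul_top_inf_one (c : Q) : c * ⊤ ⊓ 1 = ς c := by rw [h c 1, mul_one]
  have mul_top (c : Q) : c * ⊤ = ς c * ⊤ := by rw [← h c ⊤, inf_top_eq]
  rw [← mul_top_inf_one, ← mul_top_inf_one, mul_assoc, mul_assoc, mul_top b]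

variable [StarMul Q]

/-- Here `1` is the unit `e` of the paper and `⊤` is the paper's top element `1`. -/
structure IsSupport_s2 (ς : Q → Q) : Prop where
  map_sSup (s : Set Q) : ς (sSup s) = sSup (ς '' s)
  le_one (a : Q) : ς a ≤ 1
  le_mul_star (a : Q) : ς a ≤ a * star a
  le_mul_self (a : Q) : a ≤ ς a * a

namespace IsSupport_s2

variable {ς : Q → Q}

theorem monotone (hς : IsSupport_s2 ς) : Monotone ς :=
  OrderHomClass.mono (sSupHom.mk ς hς.map_sSup)

variable [IsQuantale Q]

theorem mul_self (hς : IsSupport_s2 ς) (a : Q) : ς a * a = a :=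
  ((mul_le_mul_left (hς.le_one a) a).trans_eq (one_mul a)).antisymm (hς.le_mul_self a)

theorem le_mul_top (hς : IsSupport_s2 ς) (a : Q) : ς a ≤ a * ⊤ :=
  (hς.le_mul_star a).trans (mul_le_mul_right le_top a)

theorem le_mul_of_le (hς : IsSupport_s2 ς) {a b : Q} (h : ς a ≤ ς b) : a ≤ ς b * a :=
  (hς.le_mul_self a).trans (mul_le_mul_left h a)

theorem apply_of_le_one (hς : IsSupport_s2 ς) (hstar : Monotone (star : Q → Q)) {b : Q}
    (hb : b ≤ 1) : ς b = b := by
  apply le_antisymm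
  · calc ς b ≤ b * star b := hς.le_mul_star b
      _ ≤ b * 1 := mul_le_mul_right ((hstar hb).trans_eq (star_one Q)) b
      _ = b := mul_one b
  · calc b ≤ ς b * b := hς.le_mul_self b
      _ ≤ ς b * 1 := mul_le_mul_right hb _
      _ = ς b := mul_one _

theorem apply_apply (hς : IsSupport_s2 ς) (hstar : Monotone (star : Q → Q)) (a : Q) :
    ς (ς a) = ς a :=
  hς.apply_of_le_one hstar (hς.le_one a)

theorem stable_of_map_mul_eq (hς : IsSupport_s2 ς) (h : ∀ a b, ς (a * b) = ς (a * ς b))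
    (a b : Q) : ς (a * b) ≤ ς a :=
  calc ς (a * b) = ς (a * ς b) := h a b
    _ ≤ ς (a * 1) := hς.monotone (mul_le_mul_right (hς.le_one b) a)
    _ = ς a := by rw [mul_one]

theorem map_mul_top_of_stable (hς : IsSupport_s2 ς) (h : ∀ a b, ς (a * b) ≤ ς a) (a : Q) :
    ς (a * ⊤) = ς a :=
  (h a ⊤).antisymm (hς.monotone ((mul_one a).symm.trans_le (mul_le_mul_right le_top a)))

theorem mul_top_inf_one_of_map_mul_top (hς : IsSupport_s2 ς) (hstar : Monotone (star : Q → Q))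
    (h : ∀ a, ς (a * ⊤) = ς a) (a : Q) : a * ⊤ ⊓ 1 = ς a := by
  apply le_antisymm _ (le_inf (hς.le_mul_top a) (hς.le_one a))
  calc a * ⊤ ⊓ 1 = ς (a * ⊤ ⊓ 1) := (hς.apply_of_le_one hstar inf_le_right).symm
    _ ≤ ς (a * ⊤) := hς.monotone inf_le_left
    _ = ς a := h a

theorem mul_top_inf_of_mul_top_inf_one (hς : IsSupport_s2 ς) (h : ∀ a, a * ⊤ ⊓ 1 = ς a)
    (a b : Q) : a * ⊤ ⊓ b = ς a * b := by
  set c := a * ⊤ ⊓ b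
  have hc : ς c ≤ ς a := by
    rw [← h a]
    refine le_inf ?_ (hς.le_one c)
    calc ς c ≤ c * ⊤ := hς.le_mul_top c
      _ ≤ a * ⊤ * ⊤ := mul_le_mul_left inf_le_left ⊤
      _ = a * ⊤ := by rw [mul_assoc, Quantale.top_mul_top]
  apply le_antisymm
  · exact (hς.le_mul_self c).trans (mul_le_mul' hc inf_le_right)
  · refine le_inf ?_ ?_
    · calc ς a * b ≤ a * ⊤ * b := mul_le_mul_left (hς.le_mul_top a) b
        _ ≤ a * ⊤ * ⊤ := mul_le_mul_right le_top _
        _ = a * ⊤ := by rw [mul_assoc, Quantale.top_mul_top]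
    · exact (mul_le_mul_left (hς.le_one a) b).trans_eq (one_mul b)

theorem stable_iff (hς : IsSupport_s2 ς) (hstar : Monotone (star : Q → Q)) :
    (∀ a b, ς (a * b) ≤ ς a) ↔ ∀ a b, (a ≤ ς b * a ↔ ς a ≤ ς b) := by
  refine ⟨fun h a b => ⟨fun hab => ?_, hς.le_mul_of_le⟩, fun h a b => (h (a * b) a).mp ?_⟩
  · exact (hς.monotone hab).trans ((h (ς b) a).trans_eq (hς.apply_apply hstar b))
  · rw [← mul_assoc, hς.mul_self]

theorem le_mul_iff_iff_eq_sInf (hς : IsSupport_s2 ς) (hstar : Monotone (star : Q → Q)) (a : Q) :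
    (∀ b, a ≤ ς b * a ↔ ς a ≤ ς b) ↔ ς a = sInf {b | b ≤ 1 ∧ a ≤ b * a} := by
  refine ⟨fun h => le_antisymm ?_ (sInf_le ⟨hς.le_one a, hς.le_mul_self a⟩),
    fun h b => ⟨fun hb => h ▸ sInf_le ⟨hς.le_one b, hb⟩, hς.le_mul_of_le⟩⟩
  refine le_sInf fun b ⟨hb, hab⟩ => ?_
  rw [← hς.apply_of_le_one hstar hb] at hab ⊢
  exact (h b).mp hab

theorem le_mul_top_iff_iff_mul_top_inf_one (hς : IsSupport_s2 ς) (hstar : Monotone (star : Q → Q))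
    (b : Q) : (∀ a, ς a ≤ b * ⊤ ↔ ς a ≤ ς b) ↔ b * ⊤ ⊓ 1 = ς b := by
  refine ⟨fun h => le_antisymm ?_ (le_inf (hς.le_mul_top b) (hς.le_one b)),
    fun h a => ⟨fun ha => h ▸ le_inf ha (hς.le_one a), fun ha => ha.trans (hς.le_mul_top b)⟩⟩
  set c := b * ⊤ ⊓ 1
  have hc : ς c = c := hς.apply_of_le_one hstar inf_le_right
  calc c = ς c := hc.symm
    _ ≤ ς b := (h c).mp (hc.trans_le inf_le_left)

theorem tfae_stable (hς : IsSupport_s2 ς) (hstar : Monotone (star : Q → Q)) :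
    List.TFAE [
      ∀ a b : Q, ς (a * b) = ς (a * ς b),
      ∀ a b : Q, ς (a * b) ≤ ς a,
      ∀ a : Q, ς (a * ⊤) = ς a,
      ∀ a : Q, a * ⊤ ⊓ 1 = ς a,
      ∀ a b : Q, a * ⊤ ⊓ b = ς a * b,
      ∀ a b : Q, (a ≤ ς b * a ↔ ς a ≤ ς b),
      ∀ a : Q, ς a = sInf {b : Q | b ≤ 1 ∧ a ≤ b * a},
      ∀ a b : Q, (ς a ≤ b * ⊤ ↔ ς a ≤ ς b),
      ∀ a : Q, ς a = sSup {b : Q | b ≤ 1 ∧ b ≤ a * ⊤}] := by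
  tfae_have 1 → 2 := hς.stable_of_map_mul_eq
  tfae_have 2 → 3 := hς.map_mul_top_of_stable
  tfae_have 3 → 4 := hς.mul_top_inf_one_of_map_mul_top hstar
  tfae_have 4 → 5 := hς.mul_top_inf_of_mul_top_inf_one
  tfae_have 5 → 1 := map_mul_eq_map_mul_of_mul_top_inf
  tfae_have 2 ↔ 6 := hς.stable_iff hstar
  tfae_have 6 ↔ 7 := forall_congr' (hς.le_mul_iff_iff_eq_sInf hstar)
  tfae_have 8 ↔ 4 :=
    forall_comm.trans (forall_congr' (hς.le_mul_top_iff_iff_mul_top_inf_one hstar))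
  tfae_have 4 ↔ 9 := by simp only [sSup_setOf_le_and_le, inf_comm, eq_comm]
  tfae_finish

end IsSupport_s2

end

/-- Equivalent characterizations of stability of a support
(Lemma `lemma:defstab`). -/
theorem stmt_2 {Q : Type*} [CompleteLattice Q]
    (m : Q → Q → Q) (e : Q) (st : Q → Q) (sp : Q → Q)
    (hassoc : ∀ a b c : Q, m (m a b) c = m a (m b c))
    (hdistl : ∀ (a : Q) (T : Set Q), m a (sSup T) = sSup ((fun b => m a b) '' T))
    (hdistr : ∀ (b : Q) (T : Set Q), m (sSup T) b = sSup ((fun a => m a b) '' T))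
    (hel : ∀ a : Q, m e a = a) (her : ∀ a : Q, m a e = a)
    (hstsup : ∀ T : Set Q, st (sSup T) = sSup (st '' T))
    (hstst : ∀ a : Q, st (st a) = a)
    (hstm : ∀ a b : Q, st (m a b) = m (st b) (st a))
    (hspsup : ∀ T : Set Q, sp (sSup T) = sSup (sp '' T))
    (hsp1 : ∀ a : Q, sp a ≤ e)
    (hsp2 : ∀ a : Q, sp a ≤ m a (st a))
    (hsp3 : ∀ a : Q, a ≤ m (sp a) a) :
    List.TFAE [
      ∀ a b : Q, sp (m a b) = sp (m a (sp b)),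
      ∀ a b : Q, sp (m a b) ≤ sp a,
      ∀ a : Q, sp (m a ⊤) = sp a,
      ∀ a : Q, m a ⊤ ⊓ e = sp a,
      ∀ a b : Q, m a ⊤ ⊓ b = m (sp a) b,
      ∀ a b : Q, (a ≤ m (sp b) a ↔ sp a ≤ sp b),
      ∀ a : Q, sp a = sInf {b : Q | b ≤ e ∧ a ≤ m b a},
      ∀ a b : Q, (sp a ≤ m b ⊤ ↔ sp a ≤ sp b),
      ∀ a : Q, sp a = sSup {b : Q | b ≤ e ∧ b ≤ m a ⊤}
    ] := by
  let : Monoid Q :=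
    { mul := m, one := e, mul_assoc := hassoc, one_mul := hel, mul_one := her }
  let : IsQuantale Q :=
    { mul_sSup_distrib := fun a T => (hdistl a T).trans sSup_image
      sSup_mul_distrib := fun T b => (hdistr b T).trans sSup_image }
  let : StarMul Q :=
    { star := st, star_involutive := hstst, star_mul := hstm }
  have hstar : Monotone (star : Q → Q) := OrderHomClass.mono (sSupHom.mk st hstsup)
  exact IsSupport_s2.tfae_stable ⟨hspsup, hsp1, hsp2, hsp3⟩ hstar
end

section
/- Every inverse quantale is stably supported: if Q is a supported quantale with support ς in which every element is a join of partial units, then ς(a b) ≤ ς a for all a, b ∈ Q. -/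
/-!
Since `ς` and the multiplication preserve joins and `a`, `b` are joins of partial units, it
suffices to bound `ς (t s)` for partial units `t ≤ a`, `s ≤ b`. From `s s* ≤ e` we get
`ς (t s) ≤ t s (t s)* = t (s s*) t* ≤ t t*`, and from `t t* ≤ e` we get
`t t* ≤ ς t t t* ≤ ς t`; hence `ς (t s) ≤ ς t ≤ ς a`.
-/

/-- A partial unit in a unital involutive quantale. -/
def IsPartialUnit {Q : Type*} [CompleteLattice Q]
    (m : Q → Q → Q) (e : Q) (st : Q → Q) (a : Q) : Prop :=
  m a (st a) ≤ e ∧ m (st a) a ≤ e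

theorem sSupHom.apply_le_of_eq_sSup {α β : Type*} [CompleteLattice α] [CompleteLattice β]
    (f : sSupHom α β) {P : α → Prop} {a : α} (ha : a = sSup {x | P x ∧ x ≤ a}) {c : β}
    (h : ∀ x, P x → x ≤ a → f x ≤ c) : f a ≤ c := by
  rw [ha, map_sSup]
  exact sSup_le (Set.forall_mem_image.2 fun x hx => h x hx.1 hx.2)

section SupportedQuantale

variable {Q : Type*} [Preorder Q] {m : Q → Q → Q} {e : Q} {st sp : Q → Q}

theorem mul_star_le_support_of_mul_star_le_unit (hml : ∀ c, Monotone (m · c))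
    (hmr : ∀ c, Monotone (m c)) (hassoc : ∀ a b c : Q, m (m a b) c = m a (m b c))
    (her : ∀ a : Q, m a e = a) (hsp3 : ∀ a : Q, a ≤ m (sp a) a) {t : Q}
    (ht : m t (st t) ≤ e) : m t (st t) ≤ sp t :=
  calc m t (st t) ≤ m (m (sp t) t) (st t) := hml _ (hsp3 t)
    _ = m (sp t) (m t (st t)) := hassoc _ _ _
    _ ≤ m (sp t) e := hmr _ ht
    _ = sp t := her _

theorem support_mul_le_mul_star_of_mul_star_le_unit (hml : ∀ c, Monotone (m · c))
    (hmr : ∀ c, Monotone (m c)) (hassoc : ∀ a b c : Q, m (m a b) c = m a (m b c))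
    (hel : ∀ a : Q, m e a = a) (hstm : ∀ a b : Q, st (m a b) = m (st b) (st a))
    (hsp2 : ∀ a : Q, sp a ≤ m a (st a)) (t : Q) {s : Q} (hs : m s (st s) ≤ e) :
    sp (m t s) ≤ m t (st t) :=
  calc sp (m t s) ≤ m (m t s) (st (m t s)) := hsp2 _
    _ = m t (m (m s (st s)) (st t)) := by rw [hstm, hassoc, ← hassoc s]
    _ ≤ m t (m e (st t)) := hmr _ (hml _ hs)
    _ = m t (st t) := by rw [hel]

end SupportedQuantale

theorem stmt_10_general {Q : Type*} [CompleteLattice Q]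
    (m : Q → Q → Q) (e : Q) (st : Q → Q) (sp : Q → Q)
    (hassoc : ∀ a b c : Q, m (m a b) c = m a (m b c))
    (hdistl : ∀ (a : Q) (T : Set Q), m a (sSup T) = sSup ((fun b => m a b) '' T))
    (hdistr : ∀ (b : Q) (T : Set Q), m (sSup T) b = sSup ((fun a => m a b) '' T))
    (hel : ∀ a : Q, m e a = a) (her : ∀ a : Q, m a e = a)
    (hstm : ∀ a b : Q, st (m a b) = m (st b) (st a))
    (hspsup : ∀ T : Set Q, sp (sSup T) = sSup (sp '' T))
    (hsp2 : ∀ a : Q, sp a ≤ m a (st a))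
    (hsp3 : ∀ a : Q, a ≤ m (sp a) a)
    (hjoin : ∀ a : Q, a = sSup {b : Q | IsPartialUnit m e st b ∧ b ≤ a}) :
    ∀ a b : Q, sp (m a b) ≤ sp a := by
  let mulRight (b : Q) : sSupHom Q Q := ⟨(m · b), hdistr b⟩
  let mulLeft (a : Q) : sSupHom Q Q := ⟨m a, hdistl a⟩
  let support : sSupHom Q Q := ⟨sp, hspsup⟩
  have hml : ∀ c, Monotone (m · c) := fun c => OrderHomClass.monotone (mulRight c)
  have hmr : ∀ c, Monotone (m c) := fun c => OrderHomClass.monotone (mulLeft c)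
  intro a b
  refine (support.comp (mulRight b)).apply_le_of_eq_sSup (hjoin a) fun t ht hta => ?_
  refine (support.comp (mulLeft t)).apply_le_of_eq_sSup (hjoin b) fun s hs _ => ?_
  calc sp (m t s) ≤ m t (st t) :=
        support_mul_le_mul_star_of_mul_star_le_unit hml hmr hassoc hel hstm hsp2 t hs.1
    _ ≤ sp t := mul_star_le_support_of_mul_star_le_unit hml hmr hassoc her hsp3 ht.1
    _ ≤ sp a := OrderHomClass.monotone support hta

/-- Every inverse quantale is stably supported
(Lemma `thm:invimpliesss`). -/
theorem stmt_10 {Q : Type*} [CompleteLattice Q]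
    (m : Q → Q → Q) (e : Q) (st : Q → Q) (sp : Q → Q)
    (hassoc : ∀ a b c : Q, m (m a b) c = m a (m b c))
    (hdistl : ∀ (a : Q) (T : Set Q), m a (sSup T) = sSup ((fun b => m a b) '' T))
    (hdistr : ∀ (b : Q) (T : Set Q), m (sSup T) b = sSup ((fun a => m a b) '' T))
    (hel : ∀ a : Q, m e a = a) (her : ∀ a : Q, m a e = a)
    (hstsup : ∀ T : Set Q, st (sSup T) = sSup (st '' T))
    (hstst : ∀ a : Q, st (st a) = a)
    (hstm : ∀ a b : Q, st (m a b) = m (st b) (st a))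
    (hspsup : ∀ T : Set Q, sp (sSup T) = sSup (sp '' T))
    (hsp1 : ∀ a : Q, sp a ≤ e)
    (hsp2 : ∀ a : Q, sp a ≤ m a (st a))
    (hsp3 : ∀ a : Q, a ≤ m (sp a) a)
    (hjoin : ∀ a : Q, a = sSup {b : Q | IsPartialUnit m e st b ∧ b ≤ a}) :
    ∀ a b : Q, sp (m a b) ≤ sp a :=
  stmt_10_general m e st sp hassoc hdistl hdistr hel her hstm hspsup hsp2 hsp3 hjoin
end

section
/- Let S be an inverse semigroup. Then ℒ(S), the complete lattice of downwards closed subsets of S ordered by inclusion, is an inverse quantale with: pointwise multiplication X Y = { x y : x ∈ X, y ∈ Y } (in particular the pointwise product of two downwards closed sets is downwards closed, this multiplication is associative and distributes over arbitrary unions in each variable), multiplicative unit E(S), involution X* = { x⁻¹ : x ∈ X }, and support ς X = { x x⁻¹ : x ∈ X } satisfying ς X ⊆ E(S), ς X ⊆ X X*, X ⊆ (ς X) X, and preserving arbitrary unions; moreover every element of ℒ(S) is a union of partial units of ℒ(S). -/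
/-!
In an inverse semigroup the idempotents form a commutative subsemigroup and inversion is an
anti-automorphism; everything else is bookkeeping with pointwise operations on sets. Pointwise
products of downsets are downsets because `f (a b) = (f a) b`; `E(S)` is a unit because every
`x` factors as `(x x⁻¹) x = x (x⁻¹ x)` while `f x ≤ x` and `x f ≤ x` for idempotent `f`. A
downset is the union of the principal downsets `↓x` of its elements, and `↓x` is a partial unit
since `(f x)(g x)⁻¹ = f (x x⁻¹) g` and `(f x)⁻¹ (g x) = x⁻¹ (f g) x` are idempotent.
-/

open scoped Pointwise

/-- The natural order of an inverse semigroup: `x ≤ y` iff `x = f y` for some idempotent. -/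
def InvNatLe {S : Type*} [Mul S] (x y : S) : Prop :=
  ∃ f : S, f * f = f ∧ x = f * y

/-- A subset downwards closed in the natural order. -/
def InvDwClosed {S : Type*} [Mul S] (X : Set S) : Prop :=
  ∀ x y : S, InvNatLe x y → y ∈ X → x ∈ X

structure IsInverseSemigroupInv {S : Type*} [Semigroup S] (inv : S → S) : Prop where
  mul_inv_mul : ∀ x, x * inv x * x = x
  inv_mul_inv : ∀ x, inv x * x * inv x = inv x
  eq_inv : ∀ x y, x * y * x = x → y * x * y = y → y = inv x

section

variable {S : Type*} [Semigroup S] {inv : S → S}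

namespace IsInverseSemigroupInv

theorem inv_inv (hS : IsInverseSemigroupInv inv) (x : S) : inv (inv x) = x :=
  (hS.eq_inv _ _ (hS.inv_mul_inv x) (hS.mul_inv_mul x)).symm

theorem inv_eq_self {f : S} (hS : IsInverseSemigroupInv inv) (hf : IsIdempotentElem f) :
    inv f = f :=
  (hS.eq_inv f f (by rw [hf.eq, hf.eq]) (by rw [hf.eq, hf.eq])).symm

theorem isIdempotentElem_mul_inv (hS : IsInverseSemigroupInv inv) (x : S) :
    IsIdempotentElem (x * inv x) := by
  rw [IsIdempotentElem, ← mul_assoc, hS.mul_inv_mul]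

theorem isIdempotentElem_inv_mul (hS : IsInverseSemigroupInv inv) (x : S) :
    IsIdempotentElem (inv x * x) := by
  rw [IsIdempotentElem, mul_assoc, ← mul_assoc x, hS.mul_inv_mul]

theorem isIdempotentElem_mul {e f : S} (hS : IsInverseSemigroupInv inv)
    (he : IsIdempotentElem e) (hf : IsIdempotentElem f) : IsIdempotentElem (e * f) := by
  set z := inv (e * f)
  have hzez : z * (e * f) * z = z := hS.inv_mul_inv _
  -- `f z e` is also an inverse of `e f`, so it equals `z`; this forces `z`, hence `e f`, to be
  -- idempotent.
  have hfze : f * z * e = z := hS.eq_inv _ _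
    (calc e * f * (f * z * e) * (e * f) = e * (f * f) * z * (e * e) * f := by
            simp only [mul_assoc]
      _ = e * f * z * (e * f) := by rw [hf.eq, he.eq]; simp only [mul_assoc]
      _ = e * f := hS.mul_inv_mul _)
    (calc f * z * e * (e * f) * (f * z * e) = f * (z * (e * e) * (f * f) * z) * e := by
            simp only [mul_assoc]
      _ = f * (z * (e * f) * z) * e := by rw [he.eq, hf.eq]; simp only [mul_assoc]
      _ = f * z * e := by rw [hzez])
  have hz : IsIdempotentElem z :=
    calc z * z = f * z * e * (f * z * e) := by rw [hfze]
      _ = f * (z * (e * f) * z) * e := by simp only [mul_assoc]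
      _ = z := by rw [hzez, hfze]
  rwa [← hS.inv_inv (e * f), hS.inv_eq_self hz]

theorem commute_of_isIdempotentElem {e f : S} (hS : IsInverseSemigroupInv inv)
    (he : IsIdempotentElem e) (hf : IsIdempotentElem f) : Commute e f := by
  have hef := hS.isIdempotentElem_mul he hf
  have hfe := hS.isIdempotentElem_mul hf he
  have hinv : f * e = inv (e * f) := hS.eq_inv _ _
    (calc e * f * (f * e) * (e * f) = e * (f * f) * (e * e) * f := by simp only [mul_assoc]
      _ = e * f * (e * f) := by rw [hf.eq, he.eq]; simp only [mul_assoc]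
      _ = e * f := hef.eq)
    (calc f * e * (e * f) * (f * e) = f * (e * e) * (f * f) * e := by simp only [mul_assoc]
      _ = f * e * (f * e) := by rw [he.eq, hf.eq]; simp only [mul_assoc]
      _ = f * e := hfe.eq)
  exact (hinv.trans (hS.inv_eq_self hef)).symm

theorem inv_mul (hS : IsInverseSemigroupInv inv) (x y : S) : inv (x * y) = inv y * inv x := by
  have key : ∀ a b : S, a * b * (inv b * inv a) * (a * b) = a * b := fun a b =>
    calc a * b * (inv b * inv a) * (a * b) = a * ((b * inv b) * (inv a * a)) * b := by
          simp only [mul_assoc]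
      _ = a * inv a * a * (b * inv b * b) := by
          rw [hS.commute_of_isIdempotentElem (hS.isIdempotentElem_mul_inv b)
            (hS.isIdempotentElem_inv_mul a) |>.eq]
          simp only [mul_assoc]
      _ = a * b := by rw [hS.mul_inv_mul, hS.mul_inv_mul]
  refine (hS.eq_inv _ _ (key x y) ?_).symm
  simpa only [hS.inv_inv] using key (inv y) (inv x)

theorem isIdempotentElem_inv_mul_mul {h : S} (hS : IsInverseSemigroupInv inv)
    (hh : IsIdempotentElem h) (x : S) : IsIdempotentElem (inv x * h * x) :=
  calc inv x * h * x * (inv x * h * x) = inv x * (h * (x * inv x)) * h * x := by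
        simp only [mul_assoc]
    _ = inv x * x * inv x * (h * h) * x := by
        rw [(hS.commute_of_isIdempotentElem hh (hS.isIdempotentElem_mul_inv x)).eq]
        simp only [mul_assoc]
    _ = inv x * h * x := by rw [hS.inv_mul_inv, hh.eq]

theorem image_inv_mul (hS : IsInverseSemigroupInv inv) (X Y : Set S) :
    inv '' (X * Y) = inv '' Y * inv '' X := by
  simp only [← Set.image2_mul, Set.image_image2, Set.image2_image_left, Set.image2_image_right,
    hS.inv_mul]
  exact Set.image2_swap _ _ _

theorem subset_image_mul_inv_mul (hS : IsInverseSemigroupInv inv) (X : Set S) :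
    X ⊆ (fun x => x * inv x) '' X * X := fun x hx => by
  simpa only [hS.mul_inv_mul] using
    Set.mul_mem_mul (Set.mem_image_of_mem (fun x => x * inv x) hx) hx

end IsInverseSemigroupInv

open IsInverseSemigroupInv

theorem InvNatLe.refl (hS : IsInverseSemigroupInv inv) (x : S) : InvNatLe x x :=
  ⟨x * inv x, hS.isIdempotentElem_mul_inv x, (hS.mul_inv_mul x).symm⟩

theorem InvNatLe.trans {x y z : S} (hS : IsInverseSemigroupInv inv) :
    InvNatLe x y → InvNatLe y z → InvNatLe x z := by
  rintro ⟨f, hf, rfl⟩ ⟨g, hg, rfl⟩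
  exact ⟨f * g, hS.isIdempotentElem_mul hf hg, (mul_assoc f g z).symm⟩

theorem invNatLe_mul_right {g : S} (hS : IsInverseSemigroupInv inv) (hg : IsIdempotentElem g)
    (y : S) : InvNatLe (y * g) y := by
  -- `y g = (y g y⁻¹) y`, because `g` commutes with `y⁻¹ y`
  have hcomm := (hS.commute_of_isIdempotentElem (hS.isIdempotentElem_inv_mul y) hg).eq
  refine ⟨y * g * inv y, ?_, ?_⟩
  · calc y * g * inv y * (y * g * inv y) = y * (g * (inv y * y) * g) * inv y := by
          simp only [mul_assoc]
      _ = y * (inv y * y) * (g * g) * inv y := by rw [← hcomm]; simp only [mul_assoc]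
      _ = y * g * inv y := by rw [hg.eq, ← mul_assoc y (inv y), hS.mul_inv_mul]
  · calc y * g = y * (inv y * y * g) := by rw [← mul_assoc, ← mul_assoc, hS.mul_inv_mul]
      _ = y * g * inv y * y := by rw [hcomm]; simp only [mul_assoc]

theorem invDwClosed_setOf_isIdempotentElem (hS : IsInverseSemigroupInv inv) :
    InvDwClosed {f : S | IsIdempotentElem f} := by
  rintro x y ⟨f, hf, rfl⟩ hy
  exact hS.isIdempotentElem_mul hf hy

theorem invDwClosed_setOf_invNatLe (hS : IsInverseSemigroupInv inv) (x : S) :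
    InvDwClosed {z | InvNatLe z x} :=
  fun _ _ hab hb => hab.trans hS hb

namespace InvDwClosed

variable {X Y : Set S}

theorem mul (hX : InvDwClosed X) : InvDwClosed (X * Y) := by
  rintro _ _ ⟨f, hf, rfl⟩ ⟨a, ha, b, hb, rfl⟩
  rw [← mul_assoc]
  exact Set.mul_mem_mul (hX _ a ⟨f, hf, rfl⟩ ha) hb

theorem mul_setOf_isIdempotentElem (hS : IsInverseSemigroupInv inv) (hX : InvDwClosed X) :
    X * {f : S | IsIdempotentElem f} = X := by
  refine Set.Subset.antisymm ?_ fun x hx => ?_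
  · rintro _ ⟨a, ha, g, hg, rfl⟩
    exact hX _ a (invNatLe_mul_right hS hg a) ha
  · have h := Set.mul_mem_mul hx
      (show inv x * x ∈ {f : S | IsIdempotentElem f} from hS.isIdempotentElem_inv_mul x)
    rwa [← mul_assoc, hS.mul_inv_mul] at h

theorem setOf_isIdempotentElem_mul (hS : IsInverseSemigroupInv inv) (hX : InvDwClosed X) :
    {f : S | IsIdempotentElem f} * X = X := by
  refine Set.Subset.antisymm ?_ fun x hx => ?_
  · rintro _ ⟨f, hf, a, ha, rfl⟩
    exact hX _ a ⟨f, hf, rfl⟩ ha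
  · have h := Set.mul_mem_mul
      (show x * inv x ∈ {f : S | IsIdempotentElem f} from hS.isIdempotentElem_mul_inv x) hx
    rwa [hS.mul_inv_mul] at h

theorem image_inv (hS : IsInverseSemigroupInv inv) (hX : InvDwClosed X) :
    InvDwClosed (inv '' X) := by
  rintro _ _ ⟨f, hf, rfl⟩ ⟨a, ha, rfl⟩
  refine ⟨a * f, hX _ a (invNatLe_mul_right hS hf a) ha, ?_⟩
  rw [hS.inv_mul, hS.inv_eq_self hf]

theorem image_mul_inv (hS : IsInverseSemigroupInv inv) (hX : InvDwClosed X) :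
    InvDwClosed ((fun x => x * inv x) '' X) := by
  rintro x _ ⟨f, hf, rfl⟩ ⟨a, ha, rfl⟩
  have haa := hS.isIdempotentElem_mul_inv a
  have hx : IsIdempotentElem (f * (a * inv a)) := hS.isIdempotentElem_mul hf haa
  -- the witness is `x a`, where `x = f (a a⁻¹)` lies below `a a⁻¹`
  refine ⟨f * (a * inv a) * a, hX _ a ⟨_, hx, rfl⟩ ha, ?_⟩
  calc f * (a * inv a) * a * inv (f * (a * inv a) * a)
      = f * (a * inv a) * (a * inv a) * (f * (a * inv a)) := by
        rw [hS.inv_mul, hS.inv_eq_self hx]; simp only [mul_assoc]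
    _ = f * (a * inv a) := by rw [mul_assoc f, haa.eq, hx.eq]

theorem eq_sUnion_partialUnits (hS : IsInverseSemigroupInv inv) (hX : InvDwClosed X) :
    X = ⋃₀ {U : Set S | InvDwClosed U ∧ U ⊆ X ∧
      U * (inv '' U) ⊆ {f : S | f * f = f} ∧ (inv '' U) * U ⊆ {f : S | f * f = f}} := by
  refine Set.Subset.antisymm (fun x hx => ?_) (Set.sUnion_subset fun U hU => hU.2.1)
  refine ⟨{z | InvNatLe z x},
    ⟨invDwClosed_setOf_invNatLe hS x, fun z hz => hX z x hz hx, ?_, ?_⟩, InvNatLe.refl hS x⟩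
  · rintro _ ⟨_, ⟨f, hf, rfl⟩, _, ⟨_, ⟨g, hg, rfl⟩, rfl⟩, rfl⟩
    have h := hS.isIdempotentElem_mul hf
      (hS.isIdempotentElem_mul (hS.isIdempotentElem_mul_inv x) hg)
    dsimp only
    rwa [hS.inv_mul, hS.inv_eq_self hg, show f * x * (inv x * g) = f * (x * inv x * g) by
      simp only [mul_assoc]]
  · rintro _ ⟨_, ⟨_, ⟨f, hf, rfl⟩, rfl⟩, _, ⟨g, hg, rfl⟩, rfl⟩
    have h := hS.isIdempotentElem_inv_mul_mul (hS.isIdempotentElem_mul hf hg) x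
    dsimp only
    rwa [hS.inv_mul, hS.inv_eq_self hf, show inv x * f * (g * x) = inv x * (f * g) * x by
      simp only [mul_assoc]]

end InvDwClosed

end

/-- For an inverse semigroup `S`, the downwards closed subsets form an
inverse quantale `ℒ(S)` under pointwise multiplication, with unit `E(S)`, pointwise
inversion as involution, and support `ς X = { x x⁻¹ : x ∈ X }`; moreover every downwards
closed set is a union of partial units (Lemma `lemma:invqfrominvs`). -/
theorem stmt_11 {S : Type*} [Semigroup S] (inv : S → S)
    (hinv1 : ∀ x : S, x * inv x * x = x)
    (hinv2 : ∀ x : S, inv x * x * inv x = inv x)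
    (hinvuniq : ∀ x y : S, x * y * x = x → y * x * y = y → y = inv x) :
    -- pointwise product of downwards closed sets is downwards closed
    (∀ X Y : Set S, InvDwClosed X → InvDwClosed Y → InvDwClosed (X * Y)) ∧
    -- multiplication is associative and distributes over arbitrary unions in each variable
    (∀ X Y Z : Set S, (X * Y) * Z = X * (Y * Z)) ∧
    (∀ (T : Set (Set S)) (Y : Set S), (⋃₀ T) * Y = ⋃ X ∈ T, X * Y) ∧
    (∀ (X : Set S) (T : Set (Set S)), X * (⋃₀ T) = ⋃ Y ∈ T, X * Y) ∧
    -- the set of idempotents is a downwards closed two-sided unit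
    InvDwClosed {f : S | f * f = f} ∧
    (∀ X : Set S, InvDwClosed X → X * {f : S | f * f = f} = X) ∧
    (∀ X : Set S, InvDwClosed X → {f : S | f * f = f} * X = X) ∧
    -- pointwise inversion is an involution on ℒ(S)
    (∀ X : Set S, InvDwClosed X → InvDwClosed (inv '' X)) ∧
    (∀ X : Set S, inv '' (inv '' X) = X) ∧
    (∀ X Y : Set S, inv '' (X * Y) = (inv '' Y) * (inv '' X)) ∧
    (∀ T : Set (Set S), inv '' ⋃₀ T = ⋃ X ∈ T, inv '' X) ∧
    -- the support ς X = { x x⁻¹ : x ∈ X }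
    (∀ X : Set S, InvDwClosed X → InvDwClosed ((fun x => x * inv x) '' X)) ∧
    (∀ X : Set S, InvDwClosed X → (fun x => x * inv x) '' X ⊆ {f : S | f * f = f}) ∧
    (∀ X : Set S, InvDwClosed X → (fun x => x * inv x) '' X ⊆ X * (inv '' X)) ∧
    (∀ X : Set S, InvDwClosed X → X ⊆ ((fun x => x * inv x) '' X) * X) ∧
    (∀ T : Set (Set S), (fun x => x * inv x) '' ⋃₀ T = ⋃ X ∈ T, (fun x => x * inv x) '' X) ∧
    -- every downwards closed set is a union of partial units
    (∀ X : Set S, InvDwClosed X →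
      X = ⋃₀ {U : Set S | InvDwClosed U ∧ U ⊆ X ∧
        U * (inv '' U) ⊆ {f : S | f * f = f} ∧ (inv '' U) * U ⊆ {f : S | f * f = f}}) := by
  have hS : IsInverseSemigroupInv inv := ⟨hinv1, hinv2, hinvuniq⟩
  have image_sUnion (g : S → S) (T : Set (Set S)) : g '' ⋃₀ T = ⋃ X ∈ T, g '' X := by
    rw [Set.image_sUnion, Set.sUnion_image]
  exact ⟨fun X Y hX _ => hX.mul, mul_assoc, Set.sUnion_mul, Set.mul_sUnion,
    invDwClosed_setOf_isIdempotentElem hS, fun X hX => hX.mul_setOf_isIdempotentElem hS,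
    fun X hX => hX.setOf_isIdempotentElem_mul hS, fun X hX => hX.image_inv hS,
    fun X => (Set.image_image ..).trans (by simp only [hS.inv_inv, Set.image_id']),
    hS.image_inv_mul, image_sUnion inv, fun X hX => hX.image_mul_inv hS,
    fun X _ => Set.image_subset_iff.2 fun x _ => hS.isIdempotentElem_mul_inv x,
    fun X _ => Set.image_subset_iff.2 fun x hx => Set.mul_mem_mul hx (Set.mem_image_of_mem _ hx),
    fun X _ => hS.subset_image_mul_inv_mul X, image_sUnion _,
    fun X hX => hX.eq_sUnion_partialUnits hS⟩
end

section
/- Let S be an inverse monoid, let Q be a stably supported quantale, and let h : S → Π(Q) be a monoid homomorphism. Then the map h̄ : ℒ(S) → Q defined by h̄(U) = ⨆_{s ∈ U} h(s) is a homomorphism of unital involutive quantales (it preserves arbitrary suprema, multiplication, the unit, and the involution) satisfying h̄(↓s) = h(s) for all s ∈ S, and it is the unique such homomorphism. -/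
/-! Unions of down-closed sets and their pointwise products go to joins and products because
`h̄` is a join and multiplication in `Q` distributes over joins. Everything else rests on the
inequality `a ≤ ς(a) a ≤ a a* a` of a supported quantale: with it, an idempotent partial unit lies
below `e`, elements below `e` are self-adjoint and commute, so the inverse-semigroup argument makes
inverses of partial units unique and `h (s⁻¹) = (h s)*`. Uniqueness holds because every
down-closed `U` is the union of the principal sets `↓s`, `s ∈ U`. -/

open scoped Pointwise

structure IsInverseMonoid {S : Type*} [Monoid S] (inv : S → S) : Prop where
  mul_inv_mul : ∀ x, x * inv x * x = x
  inv_mul_inv : ∀ x, inv x * x * inv x = inv x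
  eq_inv : ∀ x y, x * y * x = x → y * x * y = y → y = inv x

theorem invNatLe_refl {S : Type*} [Monoid S] (x : S) : InvNatLe x x :=
  ⟨1, one_mul 1, (one_mul x).symm⟩

theorem sUnion_image_setOf_invNatLe {S : Type*} [Monoid S] {U : Set S} (hU : InvDwClosed U) :
    ⋃₀ ((fun s => {x | InvNatLe x s}) '' U) = U := by
  ext x
  constructor
  · rintro ⟨_, ⟨s, hs, rfl⟩, hx⟩
    exact hU x s hx hs
  · intro hx
    exact ⟨_, ⟨x, hx, rfl⟩, invNatLe_refl x⟩

namespace IsInverseMonoid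

variable {S : Type*} [Monoid S] {inv : S → S}

theorem isIdempotentElem_mul_inv (hS : IsInverseMonoid inv) (x : S) :
    IsIdempotentElem (x * inv x) := by
  rw [IsIdempotentElem, ← mul_assoc, hS.mul_inv_mul]

theorem isIdempotentElem_inv_mul (hS : IsInverseMonoid inv) (x : S) :
    IsIdempotentElem (inv x * x) := by
  rw [IsIdempotentElem, ← mul_assoc, hS.inv_mul_inv]

/-- Uniqueness of inverses forces `inv (p * q) = q * inv (p * q) * p`, which is idempotent and
hence its own inverse. -/
theorem isIdempotentElem_mul (hS : IsInverseMonoid inv) {p q : S} (hp : IsIdempotentElem p)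
    (hq : IsIdempotentElem q) : IsIdempotentElem (p * q) := by
  set y := inv (p * q) with hy
  have h₁ : p * q * y * (p * q) = p * q := hS.mul_inv_mul _
  have h₂ : y * (p * q) * y = y := hS.inv_mul_inv _
  have hqyp : q * y * p = y := by
    refine hS.eq_inv (p * q) (q * y * p) ?_ ?_
    · calc p * q * (q * y * p) * (p * q) = p * (q * q) * y * (p * p) * q := by
            simp only [mul_assoc]
        _ = p * q * y * (p * q) := by rw [hp.eq, hq.eq]; simp only [mul_assoc]
        _ = p * q := h₁
    · calc q * y * p * (p * q) * (q * y * p) = q * (y * (p * p) * (q * q) * y) * p := by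
            simp only [mul_assoc]
        _ = q * y * p := by rw [hp.eq, hq.eq, mul_assoc y p q, h₂]
  have hyy : IsIdempotentElem y := by
    calc y * y = q * (y * (p * q) * y) * p := by
          conv_lhs => rw [← hqyp]
          simp only [mul_assoc]
      _ = y := by rw [h₂, hqyp]
  have hyinv : y = inv y := hS.eq_inv y y (by rw [hyy.eq, hyy.eq]) (by rw [hyy.eq, hyy.eq])
  rw [hS.eq_inv y (p * q) h₂ h₁, ← hyinv]
  exact hyy

theorem invNatLe_trans (hS : IsInverseMonoid inv) {x y z : S} :
    InvNatLe x y → InvNatLe y z → InvNatLe x z := by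
  rintro ⟨f, hf, rfl⟩ ⟨k, hk, rfl⟩
  exact ⟨f * k, hS.isIdempotentElem_mul hf hk, (mul_assoc f k z).symm⟩

theorem invDwClosed_setOf_invNatLe (hS : IsInverseMonoid inv) (s : S) :
    InvDwClosed {x | InvNatLe x s} :=
  fun _ _ hxy hy => hS.invNatLe_trans hxy hy

end IsInverseMonoid

section PartialUnit

variable {Q : Type*} [Monoid Q] [PartialOrder Q] [MulLeftMono Q] [StarMul Q]

theorem mul_star_mul_self_of_star_mul_le_one (hreg : ∀ a : Q, a ≤ a * star a * a) {a : Q}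
    (ha : star a * a ≤ 1) : a * star a * a = a := by
  refine le_antisymm ?_ (hreg a)
  rw [mul_assoc]
  exact mul_le_of_le_one_right' ha

theorem star_mul_self_mul_star_of_mul_star_le_one (hreg : ∀ a : Q, a ≤ a * star a * a) {a : Q}
    (ha : a * star a ≤ 1) : star a * a * star a = star a := by
  simpa using mul_star_mul_self_of_star_mul_le_one hreg (a := star a) (by simpa using ha)

variable [MulRightMono Q]

theorem star_eq_self_of_le_one (hreg : ∀ a : Q, a ≤ a * star a * a)
    (hstar : Monotone (star : Q → Q)) {b : Q} (hb : b ≤ 1) : star b = b := by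
  have hle : ∀ c : Q, c ≤ 1 → c ≤ star c := fun c hc =>
    calc c ≤ c * star c * c := hreg c
      _ ≤ 1 * star c * 1 := mul_le_mul' (mul_le_mul_left hc _) hc
      _ = star c := by rw [one_mul, mul_one]
  have hb' : star b ≤ 1 := star_one Q ▸ hstar hb
  exact le_antisymm (by simpa using hle _ hb') (hle b hb)

theorem mul_comm_of_le_one (hreg : ∀ a : Q, a ≤ a * star a * a)
    (hstar : Monotone (star : Q → Q)) {b c : Q} (hb : b ≤ 1) (hc : c ≤ 1) : b * c = c * b := by
  rw [← star_eq_self_of_le_one hreg hstar (mul_le_one' hb hc), star_mul,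
    star_eq_self_of_le_one hreg hstar hb, star_eq_self_of_le_one hreg hstar hc]

theorem le_one_of_isIdempotentElem (hreg : ∀ a : Q, a ≤ a * star a * a)
    (hstar : Monotone (star : Q → Q)) {a : Q} (h₁ : a * star a ≤ 1) (h₂ : star a * a ≤ 1)
    (haa : IsIdempotentElem a) : a ≤ 1 := by
  have hsa : star a ≤ 1 :=
    calc star a = star a * (a * a) * star a := by
          rw [haa.eq, star_mul_self_mul_star_of_mul_star_le_one hreg h₁]
      _ = star a * a * (a * star a) := by simp only [mul_assoc]
      _ ≤ 1 * 1 := mul_le_mul' h₂ h₁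
      _ = 1 := one_mul 1
  simpa using hstar hsa

/-- Idempotents below `1` commute, so the classical uniqueness argument for inverses in
inverse semigroups applies: both `b` and `star a` equal `star a * a * b`. -/
theorem eq_star_of_mul_le_one (hreg : ∀ a : Q, a ≤ a * star a * a)
    (hstar : Monotone (star : Q → Q)) {a b : Q} (h₁ : a * star a ≤ 1) (h₂ : star a * a ≤ 1)
    (hab : a * b ≤ 1) (hba : b * a ≤ 1) (haba : a * b * a = a) (hbab : b * a * b = b) :
    b = star a := by
  have hb : b = star a * a * b :=
    calc b = b * (a * star a * a) * b := by
          rw [mul_star_mul_self_of_star_mul_le_one hreg h₂, hbab]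
      _ = b * a * (star a * a) * b := by simp only [mul_assoc]
      _ = star a * a * (b * a * b) := by
          rw [mul_comm_of_le_one hreg hstar hba h₂]; simp only [mul_assoc]
      _ = star a * a * b := by rw [hbab]
  have hsa : star a = star a * a * b :=
    calc star a = star a * (a * b * a) * star a := by
          rw [haba, star_mul_self_mul_star_of_mul_star_le_one hreg h₁]
      _ = star a * (a * b) * (a * star a) := by simp only [mul_assoc]
      _ = star a * (a * star a) * (a * b) := by
          rw [mul_assoc (star a), mul_comm_of_le_one hreg hstar hab h₁, ← mul_assoc]
      _ = star a * a * b := by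
          rw [← mul_assoc (star a) a (star a), star_mul_self_mul_star_of_mul_star_le_one hreg h₁,
            mul_assoc]
  exact hb.trans hsa.symm

end PartialUnit

theorem IsQuantale.sSup_mul_sSup {Q : Type*} [Semigroup Q] [CompleteLattice Q] [IsQuantale Q]
    (s t : Set Q) : sSup (s * t) = sSup s * sSup t := by
  simp_rw [← Set.image2_mul, sSup_image2, sSup_mul_distrib, mul_sSup_distrib]

section Extension

variable {S Q : Type*} [Monoid S] [CompleteLattice Q] [Monoid Q] [IsQuantale Q] [StarMul Q]

theorem apply_le_one_of_isIdempotentElem (hreg : ∀ a : Q, a ≤ a * star a * a)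
    (hstar : Monotone (star : Q → Q)) (h : S →* Q)
    (hpu : ∀ s, IsPartialUnit (· * ·) 1 star (h s)) {f : S} (hf : IsIdempotentElem f) :
    h f ≤ 1 :=
  le_one_of_isIdempotentElem hreg hstar (hpu f).1 (hpu f).2 (hf.map h)

theorem star_apply_eq_apply_inv {inv : S → S} (hS : IsInverseMonoid inv)
    (hreg : ∀ a : Q, a ≤ a * star a * a) (hstar : Monotone (star : Q → Q)) (h : S →* Q)
    (hpu : ∀ s, IsPartialUnit (· * ·) 1 star (h s)) (s : S) : star (h s) = h (inv s) := by
  refine (eq_star_of_mul_le_one hreg hstar (hpu s).1 (hpu s).2 ?_ ?_ ?_ ?_).symm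
  · rw [← map_mul]
    exact apply_le_one_of_isIdempotentElem hreg hstar h hpu (hS.isIdempotentElem_mul_inv s)
  · rw [← map_mul]
    exact apply_le_one_of_isIdempotentElem hreg hstar h hpu (hS.isIdempotentElem_inv_mul s)
  · rw [← map_mul, ← map_mul, hS.mul_inv_mul]
  · rw [← map_mul, ← map_mul, hS.inv_mul_inv]

theorem sSup_image_setOf_isIdempotentElem (hreg : ∀ a : Q, a ≤ a * star a * a)
    (hstar : Monotone (star : Q → Q)) (h : S →* Q)
    (hpu : ∀ s, IsPartialUnit (· * ·) 1 star (h s)) :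
    sSup (h '' {f : S | IsIdempotentElem f}) = 1 := by
  refine le_antisymm (sSup_le ?_) (le_sSup ⟨1, IsIdempotentElem.one, map_one h⟩)
  rintro _ ⟨f, hf, rfl⟩
  exact apply_le_one_of_isIdempotentElem hreg hstar h hpu hf

theorem sSup_image_setOf_invNatLe (hreg : ∀ a : Q, a ≤ a * star a * a)
    (hstar : Monotone (star : Q → Q)) (h : S →* Q)
    (hpu : ∀ s, IsPartialUnit (· * ·) 1 star (h s)) (s : S) :
    sSup (h '' {x : S | InvNatLe x s}) = h s := by
  refine le_antisymm (sSup_le ?_) (le_sSup ⟨s, invNatLe_refl s, rfl⟩)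
  rintro _ ⟨_, ⟨f, hf, rfl⟩, rfl⟩
  rw [map_mul]
  exact mul_le_of_le_one_left' (apply_le_one_of_isIdempotentElem hreg hstar h hpu hf)

end Extension

theorem eq_sSup_image_of_map_sUnion {S Q : Type*} [Monoid S] [CompleteLattice Q] {inv : S → S}
    (hS : IsInverseMonoid inv) (h : S → Q) (g : Set S → Q)
    (hg : ∀ T : Set (Set S), (∀ U ∈ T, InvDwClosed U) → g (⋃₀ T) = ⨆ U ∈ T, g U)
    (hgh : ∀ s : S, g {x : S | InvNatLe x s} = h s) {U : Set S} (hU : InvDwClosed U) :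
    g U = sSup (h '' U) := by
  have hunion := hg ((fun s => {x | InvNatLe x s}) '' U) (by
    rintro _ ⟨s, -, rfl⟩
    exact hS.invDwClosed_setOf_invNatLe s)
  rw [sUnion_image_setOf_invNatLe hU, iSup_image] at hunion
  rw [hunion, sSup_image]
  simp only [hgh]

theorem stmt_12_general {S : Type*} [Monoid S] (inv : S → S)
    (hinv1 : ∀ x : S, x * inv x * x = x)
    (hinv2 : ∀ x : S, inv x * x * inv x = inv x)
    (hinvuniq : ∀ x y : S, x * y * x = x → y * x * y = y → y = inv x)
    {Q : Type*} [CompleteLattice Q]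
    (m : Q → Q → Q) (e : Q) (st : Q → Q) (sp : Q → Q)
    (hassoc : ∀ a b c : Q, m (m a b) c = m a (m b c))
    (hdistl : ∀ (a : Q) (T : Set Q), m a (sSup T) = sSup ((fun b => m a b) '' T))
    (hdistr : ∀ (b : Q) (T : Set Q), m (sSup T) b = sSup ((fun a => m a b) '' T))
    (hel : ∀ a : Q, m e a = a) (her : ∀ a : Q, m a e = a)
    (hstsup : ∀ T : Set Q, st (sSup T) = sSup (st '' T))
    (hstst : ∀ a : Q, st (st a) = a)
    (hstm : ∀ a b : Q, st (m a b) = m (st b) (st a))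
    (hsp2 : ∀ a : Q, sp a ≤ m a (st a))
    (hsp3 : ∀ a : Q, a ≤ m (sp a) a)
    -- a monoid homomorphism h : S → Π(Q)
    (h : S → Q)
    (hpu : ∀ s : S, IsPartialUnit m e st (h s))
    (hone : h 1 = e)
    (hmul : ∀ s t : S, h (s * t) = m (h s) (h t)) :
    -- h̄ U = ⨆ (h '' U) is a homomorphism of unital involutive quantales on ℒ(S)
    (∀ T : Set (Set S), (∀ U ∈ T, InvDwClosed U) →
      sSup (h '' ⋃₀ T) = ⨆ U ∈ T, sSup (h '' U)) ∧
    (∀ U V : Set S, InvDwClosed U → InvDwClosed V →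
      sSup (h '' (U * V)) = m (sSup (h '' U)) (sSup (h '' V))) ∧
    sSup (h '' {f : S | f * f = f}) = e ∧
    (∀ U : Set S, InvDwClosed U → sSup (h '' (inv '' U)) = st (sSup (h '' U))) ∧
    -- it extends h along principal downward closed sets
    (∀ s : S, sSup (h '' {x : S | InvNatLe x s}) = h s) ∧
    -- and it is the unique such homomorphism
    (∀ g : Set S → Q,
      (∀ T : Set (Set S), (∀ U ∈ T, InvDwClosed U) → g (⋃₀ T) = ⨆ U ∈ T, g U) →
      (∀ U V : Set S, InvDwClosed U → InvDwClosed V → g (U * V) = m (g U) (g V)) →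
      g {f : S | f * f = f} = e →
      (∀ U : Set S, InvDwClosed U → g (inv '' U) = st (g U)) →
      (∀ s : S, g {x : S | InvNatLe x s} = h s) →
      ∀ U : Set S, InvDwClosed U → g U = sSup (h '' U)) := by
  let _ : Monoid Q := { mul := m, one := e, mul_assoc := hassoc, one_mul := hel, mul_one := her }
  have _ : IsQuantale Q :=
    ⟨fun a T => (hdistl a T).trans sSup_image, fun T a => (hdistr a T).trans sSup_image⟩
  let _ : StarMul Q := { star := st, star_involutive := hstst, star_mul := hstm }
  let H : S →* Q := { toFun := h, map_one' := hone, map_mul' := hmul }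
  have hS : IsInverseMonoid inv := ⟨hinv1, hinv2, hinvuniq⟩
  have hstar : Monotone st := fun a b hab => by
    have hsup := hstsup {a, b}
    rw [sSup_pair, sup_eq_right.2 hab, Set.image_pair, sSup_pair] at hsup
    exact hsup ▸ le_sup_left
  have hreg : ∀ a : Q, a ≤ a * star a * a := fun a =>
    (hsp3 a).trans (mul_le_mul_left (hsp2 a) a)
  refine ⟨fun T _ => ?_, fun U V _ _ => ?_, sSup_image_setOf_isIdempotentElem hreg hstar H hpu,
    fun U _ => ?_, sSup_image_setOf_invNatLe hreg hstar H hpu,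
    fun g hg _ _ _ hgh U hU => eq_sSup_image_of_map_sUnion hS h g hg hgh hU⟩
  · rw [Set.image_sUnion, sSup_sUnion, iSup_image]
  · exact (congrArg sSup (Set.image_mul H)).trans (IsQuantale.sSup_mul_sSup _ _)
  · rw [Set.image_image, hstsup, Set.image_image]
    exact congrArg sSup
      (Set.image_congr fun s _ => (star_apply_eq_apply_inv hS hreg hstar H hpu s).symm)

/-- a monoid homomorphism `h : S → Π(Q)` from an inverse monoid to the
partial units of a stably supported quantale extends uniquely to a homomorphism of unital
involutive quantales `h̄ : ℒ(S) → Q`, `h̄ U = ⨆_{s ∈ U} h s`, with `h̄(↓s) = h s`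
(Theorem `thm:LS`). -/
theorem stmt_12 {S : Type*} [Monoid S] (inv : S → S)
    (hinv1 : ∀ x : S, x * inv x * x = x)
    (hinv2 : ∀ x : S, inv x * x * inv x = inv x)
    (hinvuniq : ∀ x y : S, x * y * x = x → y * x * y = y → y = inv x)
    {Q : Type*} [CompleteLattice Q]
    (m : Q → Q → Q) (e : Q) (st : Q → Q) (sp : Q → Q)
    (hassoc : ∀ a b c : Q, m (m a b) c = m a (m b c))
    (hdistl : ∀ (a : Q) (T : Set Q), m a (sSup T) = sSup ((fun b => m a b) '' T))
    (hdistr : ∀ (b : Q) (T : Set Q), m (sSup T) b = sSup ((fun a => m a b) '' T))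
    (hel : ∀ a : Q, m e a = a) (her : ∀ a : Q, m a e = a)
    (hstsup : ∀ T : Set Q, st (sSup T) = sSup (st '' T))
    (hstst : ∀ a : Q, st (st a) = a)
    (hstm : ∀ a b : Q, st (m a b) = m (st b) (st a))
    (hspsup : ∀ T : Set Q, sp (sSup T) = sSup (sp '' T))
    (hsp1 : ∀ a : Q, sp a ≤ e)
    (hsp2 : ∀ a : Q, sp a ≤ m a (st a))
    (hsp3 : ∀ a : Q, a ≤ m (sp a) a)
    (hstable : ∀ a b : Q, sp (m a b) ≤ sp a)
    -- a monoid homomorphism h : S → Π(Q)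
    (h : S → Q)
    (hpu : ∀ s : S, IsPartialUnit m e st (h s))
    (hone : h 1 = e)
    (hmul : ∀ s t : S, h (s * t) = m (h s) (h t)) :
    -- h̄ U = ⨆ (h '' U) is a homomorphism of unital involutive quantales on ℒ(S)
    (∀ T : Set (Set S), (∀ U ∈ T, InvDwClosed U) →
      sSup (h '' ⋃₀ T) = ⨆ U ∈ T, sSup (h '' U)) ∧
    (∀ U V : Set S, InvDwClosed U → InvDwClosed V →
      sSup (h '' (U * V)) = m (sSup (h '' U)) (sSup (h '' V))) ∧
    sSup (h '' {f : S | f * f = f}) = e ∧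
    (∀ U : Set S, InvDwClosed U → sSup (h '' (inv '' U)) = st (sSup (h '' U))) ∧
    -- it extends h along principal downward closed sets
    (∀ s : S, sSup (h '' {x : S | InvNatLe x s}) = h s) ∧
    -- and it is the unique such homomorphism
    (∀ g : Set S → Q,
      (∀ T : Set (Set S), (∀ U ∈ T, InvDwClosed U) → g (⋃₀ T) = ⨆ U ∈ T, g U) →
      (∀ U V : Set S, InvDwClosed U → InvDwClosed V → g (U * V) = m (g U) (g V)) →
      g {f : S | f * f = f} = e →
      (∀ U : Set S, InvDwClosed U → g (inv '' U) = st (g U)) →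
      (∀ s : S, g {x : S | InvNatLe x s} = h s) →
      ∀ U : Set S, InvDwClosed U → g U = sSup (h '' U)) :=
  stmt_12_general inv hinv1 hinv2 hinvuniq m e st sp hassoc hdistl hdistr hel her hstsup hstst hstm
    hsp2 hsp3 h hpu hone hmul
end

section
/- Let S and T be abstract complete pseudogroups and let h : S → T be a monoid homomorphism. The following are equivalent: (1) h preserves the joins of all compatible subsets of S; (2) the restriction of h to E(S) preserves all joins of subsets of E(S); (3) h preserves all joins that exist in S, i.e. whenever ⨆X exists in S then ⨆ h(X) exists in T and h(⨆X) = ⨆ h(X). -/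
/-- `z` is the join (least upper bound) of `X` with respect to the relation `le`. -/
def IsJoinRel {S : Type*} (le : S → S → Prop) (X : Set S) (z : S) : Prop :=
  (∀ x ∈ X, le x z) ∧ ∀ w : S, (∀ x ∈ X, le x w) → le z w

/-- Two elements of an inverse semigroup are compatible if `s t⁻¹` and `s⁻¹ t` are
idempotent. -/
def InvCompatible {S : Type*} [Mul S] (inv : S → S) (s t : S) : Prop :=
  (s * inv t) * (s * inv t) = s * inv t ∧ (inv s * t) * (inv s * t) = inv s * t

structure IsInverseOp {S : Type*} [Mul S] (inv : S → S) : Prop where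
  mul_inv_mul : ∀ x, x * inv x * x = x
  inv_mul_inv : ∀ x, inv x * x * inv x = inv x
  eq_inv : ∀ x y, x * y * x = x → y * x * y = y → y = inv x

def RightMulDistribJoins (S : Type*) [Mul S] : Prop :=
  ∀ (s : S) (X : Set S) (z : S), IsJoinRel InvNatLe X z →
    IsJoinRel InvNatLe ((· * s) '' X) (z * s)

namespace IsInverseOp

variable {S : Type*} [Semigroup S] {inv : S → S}

theorem inv_eq_self (hS : IsInverseOp inv) {e : S} (he : IsIdempotentElem e) : inv e = e :=
  (hS.eq_inv e e (by rw [he.eq, he.eq]) (by rw [he.eq, he.eq])).symm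

theorem isIdempotentElem_mul (hS : IsInverseOp inv) {e f : S} (he : IsIdempotentElem e)
    (hf : IsIdempotentElem f) : IsIdempotentElem (e * f) := by
  set y := inv (e * f)
  -- `f y e` is another inverse of `e f`, so it equals `y`
  have hfye : f * y * e = y := hS.eq_inv (e * f) (f * y * e)
    (by
      calc e * f * (f * y * e) * (e * f) = e * f * y * (e * f) := by
            simp only [mul_assoc, hf.mul_self_mul, he.mul_self_mul]
        _ = e * f := hS.mul_inv_mul _)
    (by
      calc f * y * e * (e * f) * (f * y * e) = f * (y * (e * f) * y) * e := by
            simp only [mul_assoc, hf.mul_self_mul, he.mul_self_mul]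
        _ = f * y * e := by rw [hS.inv_mul_inv])
  have hy : IsIdempotentElem y :=
    calc y * y = f * y * e * (f * y * e) := by rw [hfye]
      _ = f * (y * (e * f) * y) * e := by simp only [mul_assoc]
      _ = y := by rw [hS.inv_mul_inv, hfye]
  have hef : e * f = inv y := hS.eq_inv y (e * f) (hS.inv_mul_inv _) (hS.mul_inv_mul _)
  rw [hef, hS.inv_eq_self hy]
  exact hy

theorem invCompatible_of_isIdempotentElem (hS : IsInverseOp inv) {e f : S}
    (he : IsIdempotentElem e) (hf : IsIdempotentElem f) : InvCompatible inv e f := by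
  rw [InvCompatible, hS.inv_eq_self he, hS.inv_eq_self hf]
  exact ⟨hS.isIdempotentElem_mul he hf, hS.isIdempotentElem_mul he hf⟩

theorem isIdempotentElem_mul_inv (hS : IsInverseOp inv) (z : S) :
    IsIdempotentElem (z * inv z) := by
  rw [IsIdempotentElem, ← mul_assoc, hS.mul_inv_mul]

theorem isIdempotentElem_mul_inv_of_invNatLe (hS : IsInverseOp inv) {x z : S}
    (hxz : InvNatLe x z) : IsIdempotentElem (x * inv z) := by
  obtain ⟨f, hf, rfl⟩ := hxz
  rw [mul_assoc]
  exact hS.isIdempotentElem_mul hf (hS.isIdempotentElem_mul_inv z)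

theorem mul_inv_mul_of_invNatLe (hS : IsInverseOp inv) {x z : S} (hxz : InvNatLe x z) :
    x * inv z * z = x := by
  obtain ⟨f, -, rfl⟩ := hxz
  rw [mul_assoc f z, mul_assoc f, hS.mul_inv_mul]

end IsInverseOp

theorem map_isJoinRel_of_map_isJoinRel_idempotents {S T : Type*} [Semigroup S] [Mul T]
    {invS : S → S} (hS : IsInverseOp invS) (hdistS : RightMulDistribJoins S)
    (hdistT : RightMulDistribJoins T) {h : S → T} (hmul : ∀ x y, h (x * y) = h x * h y)
    (hE : ∀ (E : Set S) (w : S), (∀ e ∈ E, IsIdempotentElem e) →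
      IsJoinRel InvNatLe E w → IsJoinRel InvNatLe (h '' E) (h w))
    {X : Set S} {z : S} (hz : IsJoinRel InvNatLe X z) :
    IsJoinRel InvNatLe (h '' X) (h z) := by
  set E := (· * invS z) '' X
  have hE_idem : ∀ e ∈ E, IsIdempotentElem e := by
    rintro _ ⟨x, hx, rfl⟩
    exact hS.isIdempotentElem_mul_inv_of_invNatLe (hz.1 x hx)
  have hjoin := hdistT (h z) _ _ (hE E _ hE_idem (hdistS (invS z) X z hz))
  have hX : (· * h z) '' (h '' E) = h '' X := by
    simp only [E, Set.image_image, ← hmul]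
    exact Set.image_congr fun x hx => congrArg h (hS.mul_inv_mul_of_invNatLe (hz.1 x hx))
  rwa [hX, ← hmul, hS.mul_inv_mul] at hjoin

theorem stmt_14_general {S : Type*} [Monoid S] (invS : S → S)
    (hinv1 : ∀ x : S, x * invS x * x = x)
    (hinv2 : ∀ x : S, invS x * x * invS x = invS x)
    (hinvuniq : ∀ x y : S, x * y * x = x → y * x * y = y → y = invS x)
    (hdist : ∀ (s : S) (X : Set S) (z : S), IsJoinRel InvNatLe X z →
      IsJoinRel InvNatLe ((fun x => s * x) '' X) (s * z) ∧
      IsJoinRel InvNatLe ((fun x => x * s) '' X) (z * s))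
    {T : Type*} [Monoid T]
    (hdist' : ∀ (s : T) (X : Set T) (z : T), IsJoinRel InvNatLe X z →
      IsJoinRel InvNatLe ((fun x => s * x) '' X) (s * z) ∧
      IsJoinRel InvNatLe ((fun x => x * s) '' X) (z * s))
    (h : S → T) (hmul : ∀ x y : S, h (x * y) = h x * h y) :
    List.TFAE [
      -- (1) h preserves joins of compatible subsets
      ∀ (X : Set S) (z : S), (∀ s ∈ X, ∀ t ∈ X, InvCompatible invS s t) →
        IsJoinRel InvNatLe X z → IsJoinRel InvNatLe (h '' X) (h z),
      -- (2) the restriction of h to E(S) preserves all joins of sets of idempotents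
      ∀ (X : Set S) (z : S), (∀ x ∈ X, x * x = x) →
        IsJoinRel InvNatLe X z → IsJoinRel InvNatLe (h '' X) (h z),
      -- (3) h preserves all joins that exist in S
      ∀ (X : Set S) (z : S),
        IsJoinRel InvNatLe X z → IsJoinRel InvNatLe (h '' X) (h z)
    ] := by
  have hS : IsInverseOp invS := ⟨hinv1, hinv2, hinvuniq⟩
  tfae_have 3 → 1 := fun h3 X z _ => h3 X z
  tfae_have 1 → 2 := fun h1 X z hX =>
    h1 X z fun s hs t ht => hS.invCompatible_of_isIdempotentElem (hX s hs) (hX t ht)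
  tfae_have 2 → 3 := fun h2 X z =>
    map_isJoinRel_of_map_isJoinRel_idempotents hS (fun s X z hz => (hdist s X z hz).2)
      (fun s X z hz => (hdist' s X z hz).2) hmul h2
  tfae_finish

/-- for a monoid homomorphism `h` between abstract complete pseudogroups,
the following are equivalent: (1) `h` preserves joins of compatible subsets; (2) the
restriction of `h` to the idempotents preserves all joins of sets of idempotents;
(3) `h` preserves all existing joins (Proposition `prop:abspg`-3). -/
theorem stmt_14 {S : Type*} [Monoid S] (invS : S → S)
    (hinv1 : ∀ x : S, x * invS x * x = x)
    (hinv2 : ∀ x : S, invS x * x * invS x = invS x)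
    (hinvuniq : ∀ x y : S, x * y * x = x → y * x * y = y → y = invS x)
    (hcomplete : ∀ X : Set S, (∀ s ∈ X, ∀ t ∈ X, InvCompatible invS s t) →
      ∃ z : S, IsJoinRel InvNatLe X z)
    (hdist : ∀ (s : S) (X : Set S) (z : S), IsJoinRel InvNatLe X z →
      IsJoinRel InvNatLe ((fun x => s * x) '' X) (s * z) ∧
      IsJoinRel InvNatLe ((fun x => x * s) '' X) (z * s))
    {T : Type*} [Monoid T] (invT : T → T)
    (hinv1' : ∀ x : T, x * invT x * x = x)
    (hinv2' : ∀ x : T, invT x * x * invT x = invT x)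
    (hinvuniq' : ∀ x y : T, x * y * x = x → y * x * y = y → y = invT x)
    (hcomplete' : ∀ X : Set T, (∀ s ∈ X, ∀ t ∈ X, InvCompatible invT s t) →
      ∃ z : T, IsJoinRel InvNatLe X z)
    (hdist' : ∀ (s : T) (X : Set T) (z : T), IsJoinRel InvNatLe X z →
      IsJoinRel InvNatLe ((fun x => s * x) '' X) (s * z) ∧
      IsJoinRel InvNatLe ((fun x => x * s) '' X) (z * s))
    (h : S → T) (hone : h 1 = 1) (hmul : ∀ x y : S, h (x * y) = h x * h y) :
    List.TFAE [
      -- (1) h preserves joins of compatible subsets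
      ∀ (X : Set S) (z : S), (∀ s ∈ X, ∀ t ∈ X, InvCompatible invS s t) →
        IsJoinRel InvNatLe X z → IsJoinRel InvNatLe (h '' X) (h z),
      -- (2) the restriction of h to E(S) preserves all joins of sets of idempotents
      ∀ (X : Set S) (z : S), (∀ x ∈ X, x * x = x) →
        IsJoinRel InvNatLe X z → IsJoinRel InvNatLe (h '' X) (h z),
      -- (3) h preserves all joins that exist in S
      ∀ (X : Set S) (z : S),
        IsJoinRel InvNatLe X z → IsJoinRel InvNatLe (h '' X) (h z)
    ] :=
  stmt_14_general invS hinv1 hinv2 hinvuniq hdist hdist' h hmul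
end

section
/- Let S be an abstract complete pseudogroup, and for each downwards closed subset U of S define j(U) = { ⨆X : X ⊆ U, X compatible }. Then: (i) j(U) is the least compatibly closed ideal of S containing U; (ii) j(U) ∩ j(V) ⊆ j(U ∩ V) for all downwards closed U, V; (iii) j(U) j(V) ⊆ j(U V) for all downwards closed U, V, where the products are pointwise; (iv) j commutes with pointwise inversion: j({u⁻¹ : u ∈ U}) = { v⁻¹ : v ∈ j(U) }. -/
open scoped Pointwise

/-- A compatibly closed ideal: a downwards closed set containing the join of each of its
compatible subsets. -/
def InvCCIdeal {S : Type*} [Mul S] (inv : S → S) (I : Set S) : Prop :=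
  InvDwClosed I ∧
  ∀ X : Set S, X ⊆ I → (∀ s ∈ X, ∀ t ∈ X, InvCompatible inv s t) →
    ∀ z : S, IsJoinRel InvNatLe X z → z ∈ I

/-- The closure `j(U) = { ⨆X : X ⊆ U, X compatible }`. -/
def ccClosure {S : Type*} [Mul S] (inv : S → S) (U : Set S) : Set S :=
  {z : S | ∃ X : Set S, X ⊆ U ∧ (∀ s ∈ X, ∀ t ∈ X, InvCompatible inv s t) ∧
    IsJoinRel InvNatLe X z}

/-! In an inverse semigroup idempotents commute, and any two elements with a common upper bound
in the natural order are compatible. Hence `z ∈ j(U)` only says that `z` is the join of some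
subset of `U`, and `j(U)` contains the join of any subset of itself: that join is also the join of
all elements of `U` below it. With infinite distributivity, (ii) and (iii) reduce to writing each
element of a set with join `z` as a join of elements of `U ∩ V`, resp. `U V`; (iv) holds because
inversion is an order automorphism. -/

structure IsSemigroupInverse {S : Type*} [Semigroup S] (inv : S → S) : Prop where
  mul_inv_mul (x : S) : x * inv x * x = x
  inv_mul_inv (x : S) : inv x * x * inv x = inv x
  eq_inv_of_mul_mul (x y : S) : x * y * x = x → y * x * y = y → y = inv x

namespace IsSemigroupInverse

variable {S : Type*} [Semigroup S] {inv : S → S} (hS : IsSemigroupInverse inv)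
include hS

lemma isIdempotentElem_mul_inv (x : S) : IsIdempotentElem (x * inv x) := by
  rw [IsIdempotentElem, ← mul_assoc, hS.mul_inv_mul]

lemma isIdempotentElem_inv_mul (x : S) : IsIdempotentElem (inv x * x) := by
  rw [IsIdempotentElem, ← mul_assoc, hS.inv_mul_inv]

lemma inv_inv (x : S) : inv (inv x) = x :=
  (hS.eq_inv_of_mul_mul (inv x) x (hS.inv_mul_inv x) (hS.mul_inv_mul x)).symm

lemma inv_eq_self_of_isIdempotentElem {e : S} (he : IsIdempotentElem e) : inv e = e :=
  (hS.eq_inv_of_mul_mul e e (by rw [he.eq, he.eq]) (by rw [he.eq, he.eq])).symm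

/-- The element `f * inv (e * f) * e` is an inverse of `e * f`, hence equals `inv (e * f)`; it is
then seen to be idempotent, and an idempotent inverse forces `e * f` to be idempotent. -/
lemma isIdempotentElem_mul {e f : S} (he : IsIdempotentElem e) (hf : IsIdempotentElem f) :
    IsIdempotentElem (e * f) := by
  set a := inv (e * f) with ha
  have hbase : e * f * a * (e * f) = e * f := hS.mul_inv_mul (e * f)
  have hbase' : a * (e * f) * a = a := hS.inv_mul_inv (e * f)
  have hfae : f * a * e = a := by
    refine hS.eq_inv_of_mul_mul (e * f) (f * a * e) ?_ ?_
    · calc e * f * (f * a * e) * (e * f) = e * (f * f) * a * ((e * e) * f) := by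
            simp only [mul_assoc]
        _ = e * f := by rw [he.eq, hf.eq, hbase]
    · calc f * a * e * (e * f) * (f * a * e) = f * (a * (e * e) * (f * f) * a) * e := by
            simp only [mul_assoc]
        _ = f * a * e := by rw [he.eq, hf.eq, mul_assoc a e f, hbase', mul_assoc]
  have haa : IsIdempotentElem a := by
    calc a * a = f * (a * (e * f) * a) * e := by
          conv_lhs => rw [← hfae]
          simp only [mul_assoc]
      _ = a := by rw [hbase', hfae]
  rwa [← hS.inv_inv (e * f), ← ha, hS.inv_eq_self_of_isIdempotentElem haa]

lemma commute_of_isIdempotentElem {e f : S} (he : IsIdempotentElem e) (hf : IsIdempotentElem f) :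
    Commute e f := by
  have hef := hS.isIdempotentElem_mul he hf
  have hfe := hS.isIdempotentElem_mul hf he
  have key : f * e = inv (e * f) := by
    refine hS.eq_inv_of_mul_mul (e * f) (f * e) ?_ ?_
    · calc e * f * (f * e) * (e * f) = (e * (f * f)) * ((e * e) * f) := by simp only [mul_assoc]
        _ = e * f := by rw [he.eq, hf.eq, hef.eq]
    · calc f * e * (e * f) * (f * e) = (f * (e * e)) * ((f * f) * e) := by simp only [mul_assoc]
        _ = f * e := by rw [he.eq, hf.eq, hfe.eq]
  rw [Commute, SemiconjBy, key, hS.inv_eq_self_of_isIdempotentElem hef]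

lemma inv_mul (a b : S) : inv (a * b) = inv b * inv a := by
  have hcomm := hS.commute_of_isIdempotentElem (hS.isIdempotentElem_inv_mul a)
    (hS.isIdempotentElem_mul_inv b)
  refine (hS.eq_inv_of_mul_mul (a * b) (inv b * inv a) ?_ ?_).symm
  · calc a * b * (inv b * inv a) * (a * b) = a * ((b * inv b) * (inv a * a)) * b := by
          simp only [mul_assoc]
      _ = (a * inv a * a) * (b * inv b * b) := by rw [← hcomm.eq]; simp only [mul_assoc]
      _ = a * b := by rw [hS.mul_inv_mul, hS.mul_inv_mul]
  · calc inv b * inv a * (a * b) * (inv b * inv a)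
        = inv b * ((inv a * a) * (b * inv b)) * inv a := by simp only [mul_assoc]
      _ = (inv b * b * inv b) * (inv a * a * inv a) := by rw [hcomm.eq]; simp only [mul_assoc]
      _ = inv b * inv a := by rw [hS.inv_mul_inv, hS.inv_mul_inv]

lemma isIdempotentElem_inv_mul_mul {e : S} (he : IsIdempotentElem e) (z : S) :
    IsIdempotentElem (inv z * e * z) := by
  have hcomm := hS.commute_of_isIdempotentElem he (hS.isIdempotentElem_mul_inv z)
  calc inv z * e * z * (inv z * e * z) = inv z * (e * (z * inv z)) * e * z := by
        simp only [mul_assoc]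
    _ = (inv z * z * inv z) * (e * e) * z := by rw [hcomm.eq]; simp only [mul_assoc]
    _ = inv z * e * z := by rw [hS.inv_mul_inv, he.eq]

lemma natLe_refl (x : S) : InvNatLe x x :=
  ⟨x * inv x, hS.isIdempotentElem_mul_inv x, (hS.mul_inv_mul x).symm⟩

lemma natLe_trans {x y z : S} (hxy : InvNatLe x y) (hyz : InvNatLe y z) : InvNatLe x z := by
  obtain ⟨e, he : IsIdempotentElem e, rfl⟩ := hxy
  obtain ⟨f, hf, rfl⟩ := hyz
  exact ⟨e * f, hS.isIdempotentElem_mul he hf, (mul_assoc e f z).symm⟩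

lemma eq_mul_inv_mul_of_natLe {x y : S} (hxy : InvNatLe x y) : x = x * inv x * y := by
  obtain ⟨e, he : IsIdempotentElem e, rfl⟩ := hxy
  have hcomm := hS.commute_of_isIdempotentElem he (hS.isIdempotentElem_mul_inv y)
  calc e * y = e * (e * (y * inv y * y)) := by rw [hS.mul_inv_mul, he.mul_self_mul]
    _ = e * ((y * inv y) * e) * y := by rw [← hcomm.eq]; simp only [mul_assoc]
    _ = e * y * inv (e * y) * y := by
      rw [hS.inv_mul, hS.inv_eq_self_of_isIdempotentElem he]; simp only [mul_assoc]

lemma inv_natLe_inv {x y : S} (hxy : InvNatLe x y) : InvNatLe (inv x) (inv y) := by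
  obtain ⟨e, he : IsIdempotentElem e, rfl⟩ := hxy
  have hcomm := hS.commute_of_isIdempotentElem he (hS.isIdempotentElem_mul_inv y)
  refine ⟨inv y * e * y, hS.isIdempotentElem_inv_mul_mul he y, ?_⟩
  calc inv (e * y) = (inv y * y * inv y) * e := by
        rw [hS.inv_mul, hS.inv_eq_self_of_isIdempotentElem he, hS.inv_mul_inv]
    _ = inv y * ((y * inv y) * e) := by simp only [mul_assoc]
    _ = inv y * e * y * inv y := by rw [← hcomm.eq]; simp only [mul_assoc]

lemma compatible_of_natLe {s t z : S} (hs : InvNatLe s z) (ht : InvNatLe t z) :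
    InvCompatible inv s t := by
  obtain ⟨e, he, rfl⟩ := hs
  obtain ⟨f, hf, rfl⟩ := ht
  constructor
  · have key : e * z * inv (f * z) = e * ((z * inv z) * f) := by
      rw [hS.inv_mul, hS.inv_eq_self_of_isIdempotentElem hf]; simp only [mul_assoc]
    rw [key]
    exact hS.isIdempotentElem_mul he
      (hS.isIdempotentElem_mul (hS.isIdempotentElem_mul_inv z) hf)
  · have key : inv (e * z) * (f * z) = inv z * (e * f) * z := by
      rw [hS.inv_mul, hS.inv_eq_self_of_isIdempotentElem he]; simp only [mul_assoc]
    rw [key]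
    exact hS.isIdempotentElem_inv_mul_mul (hS.isIdempotentElem_mul he hf) z

lemma mul_inv_mul_comm_of_natLe {x y z : S} (hx : InvNatLe x z) (hy : InvNatLe y z) :
    x * inv x * y = y * inv y * x := by
  have hcomm := hS.commute_of_isIdempotentElem (hS.isIdempotentElem_mul_inv x)
    (hS.isIdempotentElem_mul_inv y)
  conv_lhs => rw [hS.eq_mul_inv_mul_of_natLe hy, ← mul_assoc, hcomm.eq]
  conv_rhs => rw [hS.eq_mul_inv_mul_of_natLe hx]
  simp only [mul_assoc]

lemma isJoinRel_image_inv {X : Set S} {z : S} (h : IsJoinRel InvNatLe X z) :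
    IsJoinRel InvNatLe (inv '' X) (inv z) := by
  refine ⟨fun _ ⟨x, hx, hxz⟩ => hxz ▸ hS.inv_natLe_inv (h.1 x hx), fun w hw => ?_⟩
  have hzw : InvNatLe z (inv w) :=
    h.2 _ fun x hx => hS.inv_inv x ▸ hS.inv_natLe_inv (hw (inv x) ⟨x, hx, rfl⟩)
  exact hS.inv_inv w ▸ hS.inv_natLe_inv hzw

end IsSemigroupInverse

def JoinsDistribLeft (S : Type*) [Mul S] : Prop :=
  ∀ (s : S) (X : Set S) (z : S), IsJoinRel InvNatLe X z →
    IsJoinRel InvNatLe ((s * ·) '' X) (s * z)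

def JoinsDistribRight (S : Type*) [Mul S] : Prop :=
  ∀ (s : S) (X : Set S) (z : S), IsJoinRel InvNatLe X z →
    IsJoinRel InvNatLe ((· * s) '' X) (z * s)

lemma InvCCIdeal.ccClosure_subset {S : Type*} [Mul S] {inv : S → S} {U I : Set S}
    (hI : InvCCIdeal inv I) (hUI : U ⊆ I) : ccClosure inv U ⊆ I :=
  fun _ ⟨X, hXU, hXc, hX⟩ => hI.2 X (hXU.trans hUI) hXc _ hX

namespace IsSemigroupInverse

variable {S : Type*} [Semigroup S] {inv : S → S} (hS : IsSemigroupInverse inv)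
include hS

lemma mem_ccClosure_of_isJoinRel {U X : Set S} {z : S} (hXU : X ⊆ U)
    (hz : IsJoinRel InvNatLe X z) : z ∈ ccClosure inv U :=
  ⟨X, hXU, fun _ hs _ ht => hS.compatible_of_natLe (hz.1 _ hs) (hz.1 _ ht), hz⟩

lemma subset_ccClosure (U : Set S) : U ⊆ ccClosure inv U := fun u hu =>
  hS.mem_ccClosure_of_isJoinRel (Set.singleton_subset_iff.2 hu)
    ⟨fun _ hx => hx ▸ hS.natLe_refl u, fun _ hw => hw u rfl⟩

/-- `z` is the join of the elements of `U` below it: these contain every set whose join is an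
element of `X`. -/
lemma join_mem_ccClosure {U X : Set S} {z : S} (hXU : X ⊆ ccClosure inv U)
    (hz : IsJoinRel InvNatLe X z) : z ∈ ccClosure inv U := by
  refine hS.mem_ccClosure_of_isJoinRel (X := {w ∈ U | InvNatLe w z}) (fun _ hw => hw.1)
    ⟨fun _ hw => hw.2, fun u hu => hz.2 u fun x hx => ?_⟩
  obtain ⟨Y, hYU, -, hY⟩ := hXU hx
  exact hY.2 u fun y hy => hu y ⟨hYU hy, hS.natLe_trans (hY.1 y hy) (hz.1 x hx)⟩

lemma invDwClosed_ccClosure (hdist : JoinsDistribLeft S) {U : Set S} (hU : InvDwClosed U) :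
    InvDwClosed (ccClosure inv U) := by
  rintro _ y ⟨f, hf, rfl⟩ ⟨X, hXU, -, hX⟩
  refine hS.mem_ccClosure_of_isJoinRel ?_ (hdist f X y hX)
  rintro _ ⟨t, ht, rfl⟩
  exact hU _ t ⟨f, hf, rfl⟩ (hXU ht)

lemma invCCIdeal_ccClosure (hdist : JoinsDistribLeft S) {U : Set S} (hU : InvDwClosed U) :
    InvCCIdeal inv (ccClosure inv U) :=
  ⟨hS.invDwClosed_ccClosure hdist hU, fun _ hX _ _ hz => hS.join_mem_ccClosure hX hz⟩

/-- Both `z = ⋁ X` and `z = ⋁ Y`, so each `x ∈ X` is `x x⁻¹ z = ⋁ { x x⁻¹ y : y ∈ Y }`, and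
`x x⁻¹ y = y y⁻¹ x` lies below both `x` and `y`. -/
lemma ccClosure_inter_subset (hdist : JoinsDistribLeft S) {U V : Set S} (hU : InvDwClosed U)
    (hV : InvDwClosed V) : ccClosure inv U ∩ ccClosure inv V ⊆ ccClosure inv (U ∩ V) := by
  rintro z ⟨⟨X, hXU, -, hX⟩, ⟨Y, hYV, -, hY⟩⟩
  refine hS.join_mem_ccClosure (fun x hx => ?_) hX
  have hxz := hX.1 x hx
  have hjoin := hdist (x * inv x) Y z hY
  rw [← hS.eq_mul_inv_mul_of_natLe hxz] at hjoin
  refine hS.mem_ccClosure_of_isJoinRel ?_ hjoin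
  rintro _ ⟨y, hy, rfl⟩
  have hyx : InvNatLe (x * inv x * y) x :=
    ⟨y * inv y, hS.isIdempotentElem_mul_inv y, hS.mul_inv_mul_comm_of_natLe hxz (hY.1 y hy)⟩
  exact ⟨hU _ x hyx (hXU hx), hV _ y ⟨x * inv x, hS.isIdempotentElem_mul_inv x, rfl⟩ (hYV hy)⟩

lemma ccClosure_mul_subset (hl : JoinsDistribLeft S) (hr : JoinsDistribRight S)
    {U V : Set S} : ccClosure inv U * ccClosure inv V ⊆ ccClosure inv (U * V) := by
  rintro _ ⟨a, ⟨X, hXU, -, hX⟩, b, ⟨Y, hYV, -, hY⟩, rfl⟩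
  refine hS.join_mem_ccClosure ?_ (hr b X a hX)
  rintro _ ⟨x, hx, rfl⟩
  exact hS.mem_ccClosure_of_isJoinRel
    (Set.image_subset_iff.2 fun y hy => Set.mul_mem_mul (hXU hx) (hYV hy)) (hl x Y b hY)

lemma inv_mem_ccClosure_image {U : Set S} {z : S} (hz : z ∈ ccClosure inv U) :
    inv z ∈ ccClosure inv (inv '' U) := by
  obtain ⟨X, hXU, -, hX⟩ := hz
  exact hS.mem_ccClosure_of_isJoinRel (Set.image_mono hXU) (hS.isJoinRel_image_inv hX)

lemma ccClosure_image_inv (U : Set S) : ccClosure inv (inv '' U) = inv '' ccClosure inv U := by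
  refine Set.Subset.antisymm (fun w hw => ⟨inv w, ?_, hS.inv_inv w⟩)
    (Set.image_subset_iff.2 fun _ => hS.inv_mem_ccClosure_image)
  simpa only [Set.image_image, hS.inv_inv, Set.image_id'] using hS.inv_mem_ccClosure_image hw

end IsSemigroupInverse

theorem stmt_15_general {S : Type*} [Semigroup S] (inv : S → S)
    (hinv1 : ∀ x : S, x * inv x * x = x)
    (hinv2 : ∀ x : S, inv x * x * inv x = inv x)
    (hinvuniq : ∀ x y : S, x * y * x = x → y * x * y = y → y = inv x)
    (hdist : ∀ (s : S) (X : Set S) (z : S), IsJoinRel InvNatLe X z →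
      IsJoinRel InvNatLe ((fun x => s * x) '' X) (s * z) ∧
      IsJoinRel InvNatLe ((fun x => x * s) '' X) (z * s)) :
    -- (i) j(U) is the least compatibly closed ideal containing U
    (∀ U : Set S, InvDwClosed U →
      U ⊆ ccClosure inv U ∧ InvCCIdeal inv (ccClosure inv U) ∧
      ∀ I : Set S, InvCCIdeal inv I → U ⊆ I → ccClosure inv U ⊆ I) ∧
    -- (ii) j(U) ∩ j(V) ⊆ j(U ∩ V)
    (∀ U V : Set S, InvDwClosed U → InvDwClosed V →
      ccClosure inv U ∩ ccClosure inv V ⊆ ccClosure inv (U ∩ V)) ∧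
    -- (iii) j(U) j(V) ⊆ j(U V)
    (∀ U V : Set S, InvDwClosed U → InvDwClosed V →
      ccClosure inv U * ccClosure inv V ⊆ ccClosure inv (U * V)) ∧
    -- (iv) j commutes with pointwise inversion
    (∀ U : Set S, InvDwClosed U →
      ccClosure inv (inv '' U) = inv '' ccClosure inv U) := by
  have hS : IsSemigroupInverse inv := ⟨hinv1, hinv2, hinvuniq⟩
  have hl : JoinsDistribLeft S := fun s X z h => (hdist s X z h).1
  have hr : JoinsDistribRight S := fun s X z h => (hdist s X z h).2
  exact ⟨fun U hU => ⟨hS.subset_ccClosure U, hS.invCCIdeal_ccClosure hl hU,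
      fun _ hI hUI => hI.ccClosure_subset hUI⟩,
    fun _ _ hU hV => hS.ccClosure_inter_subset hl hU hV,
    fun _ _ _ _ => hS.ccClosure_mul_subset hl hr,
    fun U _ => hS.ccClosure_image_inv U⟩

/-- for an abstract complete pseudogroup, `j(U)` is the least compatibly
closed ideal containing a downwards closed set `U`, and `j` is a nucleus for meets,
pointwise products and pointwise inversion. -/
theorem stmt_15 {S : Type*} [Semigroup S] (inv : S → S)
    (hinv1 : ∀ x : S, x * inv x * x = x)
    (hinv2 : ∀ x : S, inv x * x * inv x = inv x)
    (hinvuniq : ∀ x y : S, x * y * x = x → y * x * y = y → y = inv x)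
    (hcomplete : ∀ X : Set S, (∀ s ∈ X, ∀ t ∈ X, InvCompatible inv s t) →
      ∃ z : S, IsJoinRel InvNatLe X z)
    (hdist : ∀ (s : S) (X : Set S) (z : S), IsJoinRel InvNatLe X z →
      IsJoinRel InvNatLe ((fun x => s * x) '' X) (s * z) ∧
      IsJoinRel InvNatLe ((fun x => x * s) '' X) (z * s)) :
    -- (i) j(U) is the least compatibly closed ideal containing U
    (∀ U : Set S, InvDwClosed U →
      U ⊆ ccClosure inv U ∧ InvCCIdeal inv (ccClosure inv U) ∧
      ∀ I : Set S, InvCCIdeal inv I → U ⊆ I → ccClosure inv U ⊆ I) ∧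
    -- (ii) j(U) ∩ j(V) ⊆ j(U ∩ V)
    (∀ U V : Set S, InvDwClosed U → InvDwClosed V →
      ccClosure inv U ∩ ccClosure inv V ⊆ ccClosure inv (U ∩ V)) ∧
    -- (iii) j(U) j(V) ⊆ j(U V)
    (∀ U V : Set S, InvDwClosed U → InvDwClosed V →
      ccClosure inv U * ccClosure inv V ⊆ ccClosure inv (U * V)) ∧
    -- (iv) j commutes with pointwise inversion
    (∀ U : Set S, InvDwClosed U →
      ccClosure inv (inv '' U) = inv '' ccClosure inv U) :=
  stmt_15_general inv hinv1 hinv2 hinvuniq hdist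
end

section
/- Let Q be a unital involutive quantale whose underlying complete lattice is a frame, with unit e and top element 1. Then Q satisfies, for all a ∈ Q, the two conditions (a ∧ e) 1 ≤ ⨆{ x ∧ y : x, y ∈ Q, x y* ≤ a } and 1 (a ∧ e) ≤ ⨆{ x ∧ y : x, y ∈ Q, x* y ≤ a }, if and only if ⨆ Π(Q) = 1, i.e. the top element is the join of the partial units of Q. -/
section LaxInversion

variable {Q : Type*}

def meetsOfMulStarLE [Lattice Q] (m : Q → Q → Q) (st : Q → Q) (a : Q) : Set Q :=
  {z | ∃ x y : Q, m x (st y) ≤ a ∧ z = x ⊓ y}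

def meetsOfStarMulLE [Lattice Q] (m : Q → Q → Q) (st : Q → Q) (a : Q) : Set Q :=
  {z | ∃ x y : Q, m (st x) y ≤ a ∧ z = x ⊓ y}

variable [CompleteLattice Q] {m : Q → Q → Q} {e : Q} {st : Q → Q}

theorem isPartialUnit_of_le (hml : ∀ b, Monotone (m · b)) (hmr : ∀ a, Monotone (m a))
    (hst : Monotone st) {w x y u v : Q} (hx : w ≤ x) (hy : w ≤ y) (hxy : m x (st y) ≤ e)
    (hu : w ≤ u) (hv : w ≤ v) (huv : m (st u) v ≤ e) : IsPartialUnit m e st w :=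
  ⟨(hml _ hx).trans <| (hmr _ (hst hy)).trans hxy,
    (hml _ (hst hu)).trans <| (hmr _ hv).trans huv⟩

variable (hassoc : ∀ a b c : Q, m (m a b) c = m a (m b c))
  (hel : ∀ a : Q, m e a = a) (her : ∀ a : Q, m a e = a)
  (hml : ∀ b, Monotone (m · b)) (hmr : ∀ a, Monotone (m a))
include hassoc hel her hml hmr

theorem mul_mem_meetsOfMulStarLE {u : Q} (hu : IsPartialUnit m e st u) (a : Q) :
    m (a ⊓ e) u ∈ meetsOfMulStarLE m st a := by
  refine ⟨m (a ⊓ e) u, u, ?_, (inf_eq_left.mpr ?_).symm⟩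
  · calc m (m (a ⊓ e) u) (st u) = m (a ⊓ e) (m u (st u)) := hassoc _ _ _
      _ ≤ m (a ⊓ e) e := hmr _ hu.1
      _ = a ⊓ e := her _
      _ ≤ a := inf_le_left
  · calc m (a ⊓ e) u ≤ m e u := hml _ inf_le_right
      _ = u := hel u

theorem mul_mem_meetsOfStarMulLE {u : Q} (hu : IsPartialUnit m e st u) (a : Q) :
    m u (a ⊓ e) ∈ meetsOfStarMulLE m st a := by
  refine ⟨u, m u (a ⊓ e), ?_, (inf_eq_right.mpr ?_).symm⟩
  · calc m (st u) (m u (a ⊓ e)) = m (m (st u) u) (a ⊓ e) := (hassoc _ _ _).symm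
      _ ≤ m e (a ⊓ e) := hml _ hu.2
      _ = a ⊓ e := hel _
      _ ≤ a := inf_le_left
  · calc m u (a ⊓ e) ≤ m u e := hmr _ inf_le_right
      _ = u := her u

end LaxInversion

theorem sSup_isPartialUnit_eq_top {Q : Type*} [Order.Frame Q] {m : Q → Q → Q} {e : Q}
    {st : Q → Q} (hml : ∀ b, Monotone (m · b)) (hmr : ∀ a, Monotone (m a)) (hst : Monotone st)
    (hright : ⊤ ≤ sSup (meetsOfMulStarLE m st e)) (hleft : ⊤ ≤ sSup (meetsOfStarMulLE m st e)) :
    sSup {x : Q | IsPartialUnit m e st x} = ⊤ := by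
  refine top_le_iff.mp <| (le_inf hright hleft).trans ?_
  rw [sSup_inf_sSup]
  refine iSup₂_le fun _ ⟨⟨x, y, hxy, hxy_eq⟩, ⟨u, v, huv, huv_eq⟩⟩ => le_sSup ?_
  rw [hxy_eq, huv_eq]
  exact isPartialUnit_of_le hml hmr hst (inf_le_left.trans inf_le_left)
    (inf_le_left.trans inf_le_right) hxy (inf_le_right.trans inf_le_left)
    (inf_le_right.trans inf_le_right) huv

theorem stmt_17_general {Q : Type*} [Order.Frame Q]
    (m : Q → Q → Q) (e : Q) (st : Q → Q)
    (hassoc : ∀ a b c : Q, m (m a b) c = m a (m b c))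
    (hdistl : ∀ (a : Q) (T : Set Q), m a (sSup T) = sSup ((fun b => m a b) '' T))
    (hdistr : ∀ (b : Q) (T : Set Q), m (sSup T) b = sSup ((fun a => m a b) '' T))
    (hel : ∀ a : Q, m e a = a) (her : ∀ a : Q, m a e = a)
    (hstsup : ∀ T : Set Q, st (sSup T) = sSup (st '' T)) :
    ((∀ a : Q,
        m (a ⊓ e) ⊤ ≤ sSup {z : Q | ∃ x y : Q, m x (st y) ≤ a ∧ z = x ⊓ y} ∧
        m ⊤ (a ⊓ e) ≤ sSup {z : Q | ∃ x y : Q, m (st x) y ≤ a ∧ z = x ⊓ y}) ↔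
      sSup {x : Q | IsPartialUnit m e st x} = ⊤) := by
  have hml : ∀ b, Monotone (m · b) := fun b =>
    (ScottContinuous.of_map_sSup fun T _ _ => hdistr b T).monotone
  have hmr : ∀ a, Monotone (m a) := fun a =>
    (ScottContinuous.of_map_sSup fun T _ _ => hdistl a T).monotone
  have hst : Monotone st := (ScottContinuous.of_map_sSup fun T _ _ => hstsup T).monotone
  constructor
  · intro hlaws
    obtain ⟨hright, hleft⟩ := hlaws e
    rw [inf_idem, hel] at hright
    rw [inf_idem, her] at hleft
    exact sSup_isPartialUnit_eq_top hml hmr hst hright hleft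
  · intro htop a
    rw [← htop, hdistl, hdistr]
    exact ⟨sSup_le_sSup <| Set.image_subset_iff.mpr fun u hu =>
        mul_mem_meetsOfMulStarLE hassoc hel her hml hmr hu a,
      sSup_le_sSup <| Set.image_subset_iff.mpr fun u hu =>
        mul_mem_meetsOfStarMulLE hassoc hel her hml hmr hu a⟩

/-- a unital involutive quantal frame satisfies the two lax inversion laws
`(a ∧ e) 1 ≤ ⨆{x ∧ y : x y* ≤ a}` and `1 (a ∧ e) ≤ ⨆{x ∧ y : x* y ≤ a}` if and only if
its top is the join of its partial units (Lemma `inversionlemma`). -/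
theorem stmt_17 {Q : Type*} [Order.Frame Q]
    (m : Q → Q → Q) (e : Q) (st : Q → Q)
    (hassoc : ∀ a b c : Q, m (m a b) c = m a (m b c))
    (hdistl : ∀ (a : Q) (T : Set Q), m a (sSup T) = sSup ((fun b => m a b) '' T))
    (hdistr : ∀ (b : Q) (T : Set Q), m (sSup T) b = sSup ((fun a => m a b) '' T))
    (hel : ∀ a : Q, m e a = a) (her : ∀ a : Q, m a e = a)
    (hstsup : ∀ T : Set Q, st (sSup T) = sSup (st '' T))
    (hstst : ∀ a : Q, st (st a) = a)
    (hstm : ∀ a b : Q, st (m a b) = m (st b) (st a)) :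
    ((∀ a : Q,
        m (a ⊓ e) ⊤ ≤ sSup {z : Q | ∃ x y : Q, m x (st y) ≤ a ∧ z = x ⊓ y} ∧
        m ⊤ (a ⊓ e) ≤ sSup {z : Q | ∃ x y : Q, m (st x) y ≤ a ∧ z = x ⊓ y}) ↔
      sSup {x : Q | IsPartialUnit m e st x} = ⊤) :=
  stmt_17_general m e st hassoc hdistl hdistr hel her hstsup
end
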